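/- arXiv:2309.15451 — 9 statements merged into one kernel-verified Lean document; each statement's English description precedes it below -/
import Mathlib

section
/- Let n ≥ 1, let 1 ≤ r ≤ n, and let A be an n×n positive definite Hermitian complex matrix written in block form A = [[A₁, C], [Cᴴ, A₂]] with respect to the splitting of the index set into the first r indices and the remaining n−r indices. Let v be an r×r positive definite Hermitian matrix and set V = [[v, 0], [0, 0]] (an n×n positive semidefinite matrix). Then A + tV is invertible for all real t ≥ 0, and as t → +∞ the matrices (A + tV)⁻¹ converge to the block matrix [[0, 0], [0, A₂⁻¹]]. (Lemma 5.6, in the coordinates used in its proof.) -/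
/-!
Positivity makes everything invertible: `A + tV` is positive definite for `t ≥ 0`, and the
Schur complement of the positive definite block `A₂` in `A + tV` is `S + t v` with
`S = A₁ - C A₂⁻¹ Cᴴ`. The block-inverse formula writes `(A + tV)⁻¹` as a continuous function of
`(S + t v)⁻¹`, which equals `t⁻¹ (t⁻¹ S + v)⁻¹` and hence tends to `0 · v⁻¹ = 0`; the block
formula at `0` is `[[0, 0], [0, A₂⁻¹]]`.
-/

open Matrix ComplexOrder Filter

open Topology

namespace Matrix

variable {m n R : Type*} [Fintype m] [Fintype n] [DecidableEq m] [DecidableEq n]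

theorem inv_smul₀ {K : Type*} [Field K] (k : K) (A : Matrix n n K) :
    (k • A)⁻¹ = k⁻¹ • A⁻¹ := by
  rcases eq_or_ne k 0 with rfl | hk
  · simp
  by_cases hA : IsUnit A.det
  · exact inv_smul' A (Units.mk0 k hk) hA
  · have hkA : ¬IsUnit (k • A).det := by
      simpa [det_smul, hk] using hA
    rw [nonsing_inv_apply_not_isUnit _ hA, nonsing_inv_apply_not_isUnit _ hkA, smul_zero]

theorem inv_fromBlocks_of_isUnit₂₂ [CommRing R] {A : Matrix m m R} {B : Matrix m n R}
    {C : Matrix n m R} {D : Matrix n n R} (hM : IsUnit (fromBlocks A B C D)) (hD : IsUnit D) :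
    (fromBlocks A B C D)⁻¹ =
      fromBlocks (A - B * D⁻¹ * C)⁻¹ (-((A - B * D⁻¹ * C)⁻¹ * B * D⁻¹))
        (-(D⁻¹ * C * (A - B * D⁻¹ * C)⁻¹))
        (D⁻¹ + D⁻¹ * C * (A - B * D⁻¹ * C)⁻¹ * B * D⁻¹) := by
  let := hD.invertible
  let := hM.invertible
  let := invertibleOfFromBlocks₂₂Invertible A B C D
  simpa only [invOf_eq_nonsing_inv] using invOf_fromBlocks₂₂_eq A B C D

theorem tendsto_inv_fromBlocks_of_tendsto_inv_schur [CommRing R] [TopologicalSpace R]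
    [IsTopologicalRing R] {α : Type*} {l : Filter α} {A : α → Matrix m m R}
    {B : Matrix m n R} {C : Matrix n m R} {D : Matrix n n R} (hD : IsUnit D)
    (hM : ∀ᶠ a in l, IsUnit (fromBlocks (A a) B C D))
    (hS : Tendsto (fun a => (A a - B * D⁻¹ * C)⁻¹) l (𝓝 0)) :
    Tendsto (fun a => (fromBlocks (A a) B C D)⁻¹) l (𝓝 (fromBlocks 0 0 0 D⁻¹)) := by
  let F : Matrix m m R → Matrix (m ⊕ n) (m ⊕ n) R := fun X =>
    fromBlocks X (-(X * B * D⁻¹)) (-(D⁻¹ * C * X)) (D⁻¹ + D⁻¹ * C * X * B * D⁻¹)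
  have hF : Continuous F := by unfold F; fun_prop
  have hF0 : F 0 = fromBlocks 0 0 0 D⁻¹ := by simp [F]
  rw [← hF0]
  refine ((hF.tendsto 0).comp hS).congr' ?_
  filter_upwards [hM] with a ha
  exact (inv_fromBlocks_of_isUnit₂₂ ha hD).symm

theorem tendsto_inv_add_smul_atTop {𝕜 : Type*} [RCLike 𝕜] (S : Matrix n n 𝕜)
    {v : Matrix n n 𝕜} (hv : IsUnit v) :
    Tendsto (fun t : ℝ => (S + (t : 𝕜) • v)⁻¹) atTop (𝓝 0) := by
  have hinv : Tendsto (fun t : ℝ => (t : 𝕜)⁻¹) atTop (𝓝 0) := by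
    simpa [Function.comp_def] using
      ((RCLike.continuous_ofReal (K := 𝕜)).tendsto 0).comp tendsto_inv_atTop_zero
  have hv' : ContinuousAt Inv.inv v :=
    continuousAt_matrix_inv v <| by
      simpa [Ring.inverse_eq_inv'] using continuousAt_inv₀ ((isUnit_iff_isUnit_det v).1 hv).ne_zero
  have hshift : Tendsto (fun t : ℝ => (t : 𝕜)⁻¹ • S + v) atTop (𝓝 v) := by
    simpa using (hinv.smul_const S).add_const v
  have hlim := hinv.smul (hv'.tendsto.comp hshift)
  rw [zero_smul] at hlim
  refine hlim.congr' ?_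
  filter_upwards [eventually_gt_atTop 0] with t ht
  have ht' : (t : 𝕜) ≠ 0 := RCLike.ofReal_ne_zero.2 ht.ne'
  simp [← inv_smul₀, smul_add, smul_smul, ht']

end Matrix

theorem stmt4_general (n r : ℕ)
    (A₁ : Matrix (Fin r) (Fin r) ℂ) (A₂ : Matrix (Fin (n - r)) (Fin (n - r)) ℂ)
    (C : Matrix (Fin r) (Fin (n - r)) ℂ)
    (hA : (Matrix.fromBlocks A₁ C Cᴴ A₂).PosDef)
    (v : Matrix (Fin r) (Fin r) ℂ) (hv : v.PosDef) :
    (∀ t : ℝ, 0 ≤ t →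
      IsUnit (Matrix.fromBlocks A₁ C Cᴴ A₂ + (t : ℂ) • Matrix.fromBlocks v 0 0 0).det) ∧
    Tendsto
      (fun t : ℝ => (Matrix.fromBlocks A₁ C Cᴴ A₂ + (t : ℂ) • Matrix.fromBlocks v 0 0 0)⁻¹)
      atTop (nhds (Matrix.fromBlocks 0 0 0 A₂⁻¹)) := by
  have hA₂ : A₂.PosDef := hA.submatrix Sum.inr_injective
  have hV : (fromBlocks v 0 0 0 : Matrix (Fin r ⊕ Fin (n - r)) _ ℂ).PosSemidef := by
    have := hv.isUnit.invertible
    -- its Schur complement with respect to `v` is `0`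
    simpa using
      (PosDef.fromBlocks₁₁ (0 : Matrix (Fin r) (Fin (n - r)) ℂ) 0 hv).2 (by simpa using .zero)
  have hunit (t : ℝ) (ht : 0 ≤ t) :
      IsUnit (fromBlocks A₁ C Cᴴ A₂ + (t : ℂ) • fromBlocks v 0 0 0) :=
    (hA.add_posSemidef (hV.smul (RCLike.ofReal_nonneg.2 ht))).isUnit
  have hblocks (t : ℝ) : fromBlocks A₁ C Cᴴ A₂ + (t : ℂ) • fromBlocks v 0 0 0 =
      fromBlocks (A₁ + (t : ℂ) • v) C Cᴴ A₂ := by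
    simp [fromBlocks_smul, fromBlocks_add]
  refine ⟨fun t ht => (isUnit_iff_isUnit_det _).1 (hunit t ht), ?_⟩
  simp only [hblocks] at hunit ⊢
  refine tendsto_inv_fromBlocks_of_tendsto_inv_schur hA₂.isUnit
    ((eventually_ge_atTop 0).mono hunit) ?_
  simpa only [add_sub_right_comm, RCLike.ofReal_eq_complex_ofReal] using
    tendsto_inv_add_smul_atTop (A₁ - C * A₂⁻¹ * Cᴴ) hv.isUnit

/-- Lemma 5.6 (in the coordinates of its proof): if `A = [[A₁, C], [Cᴴ, A₂]]` is
positive definite, `v` is positive definite of size `r`, and `V = [[v, 0], [0, 0]]`,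
then `A + t V` is invertible for all `t ≥ 0` and `(A + t V)⁻¹ → [[0, 0], [0, A₂⁻¹]]`
as `t → +∞`. -/
theorem stmt4 (n r : ℕ) (hn : 1 ≤ n) (hr1 : 1 ≤ r) (hrn : r ≤ n)
    (A₁ : Matrix (Fin r) (Fin r) ℂ) (A₂ : Matrix (Fin (n - r)) (Fin (n - r)) ℂ)
    (C : Matrix (Fin r) (Fin (n - r)) ℂ)
    (hA : (Matrix.fromBlocks A₁ C Cᴴ A₂).PosDef)
    (v : Matrix (Fin r) (Fin r) ℂ) (hv : v.PosDef) :
    (∀ t : ℝ, 0 ≤ t →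
      IsUnit (Matrix.fromBlocks A₁ C Cᴴ A₂ + (t : ℂ) • Matrix.fromBlocks v 0 0 0).det) ∧
    Tendsto
      (fun t : ℝ => (Matrix.fromBlocks A₁ C Cᴴ A₂ + (t : ℂ) • Matrix.fromBlocks v 0 0 0)⁻¹)
      atTop (nhds (Matrix.fromBlocks 0 0 0 A₂⁻¹)) :=
  stmt4_general n r A₁ A₂ C hA v hv
end

section
/- Let 0 ≤ l ≤ k ≤ n be integers. If A and B are n×n positive definite Hermitian complex matrices with B − A positive semidefinite, then σ_l(B)/σ_k(B) ≤ σ_l(A)/σ_k(A); that is, the function A ↦ σ_l(A)/σ_k(A) is monotone decreasing with respect to the Loewner order on positive definite Hermitian matrices. (Lemma 6.2 (1).) -/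
/-!
Write `B = A + ∑ⱼ cⱼ vⱼ vⱼᴴ` with `cⱼ ≥ 0` (spectral decomposition of `B - A`), so it suffices to
treat a single rank-one step `A ↦ A + c v vᴴ` with `A` positive definite. In an eigenbasis of `A`,
with eigenvalues `λ` and `w = Uᴴ v`, the matrix determinant lemma applied to each principal minor
gives `σₘ(A + c v vᴴ) = eₘ(λ) + c ∑ᵢ |wᵢ|² eₘ₋₁(λ without λᵢ)`. The ratio inequality then reduces,
term by term, to `eₗ₋₁(μ) eₖ(μ) ≤ eₗ(μ) eₖ₋₁(μ)` for nonnegative `μ` and `l ≤ k`, an instance of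
`eₚ eᵤ ≤ e_q e_r` whenever `p + u = q + r` and `p ≤ q, r`, which follows by induction on the number
of variables from `eₘ(μ, a) = eₘ(μ) + a eₘ₋₁(μ)`.
-/

open Matrix ComplexOrder

/-- `esymm A k` is the `k`-th elementary symmetric function of the eigenvalues of the
Hermitian matrix `A`, computed as the (real part of the) sum of all `k × k` principal
minors of `A`. -/
noncomputable def esymm {ι : Type*} [Fintype ι] [DecidableEq ι]
    (A : Matrix ι ι ℂ) (k : ℕ) : ℝ :=
  (∑ S ∈ Finset.powersetCard k (Finset.univ : Finset ι),
    (A.submatrix (fun i : {x : ι // x ∈ S} => (i : ι))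
      (fun i : {x : ι // x ∈ S} => (i : ι))).det).re

open Finset

/-- The integer index (with value `0` below `0`) lets `eₘ₋₁` appear without a case split at
`m = 0`. -/
noncomputable def elemSymm {ι R : Type*} [CommSemiring R] (s : Finset ι) (x : ι → R) (m : ℤ) : R :=
  ∑ t ∈ s.powerset with (#t : ℤ) = m, ∏ i ∈ t, x i

section elemSymm

variable {ι R : Type*} {s : Finset ι}

lemma elemSymm_natCast [CommSemiring R] (s : Finset ι) (x : ι → R) (m : ℕ) :
    elemSymm s x m = ∑ t ∈ s.powersetCard m, ∏ i ∈ t, x i := by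
  simp [elemSymm, powersetCard_eq_filter]

lemma elemSymm_empty [CommSemiring R] (x : ι → R) (m : ℤ) :
    elemSymm ∅ x m = if m = 0 then 1 else 0 := by
  simp [elemSymm, sum_filter, eq_comm]

lemma elemSymm_insert [CommSemiring R] [DecidableEq ι] {x : ι → R} {a : ι} (ha : a ∉ s)
    (m : ℤ) : elemSymm (insert a s) x m = elemSymm s x m + x a * elemSymm s x (m - 1) := by
  simp only [elemSymm, sum_filter, sum_powerset_insert ha, mul_sum]
  congr 1
  refine sum_congr rfl fun t ht => ?_
  have hat : a ∉ t := fun h => ha (mem_powerset.1 ht h)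
  simp only [card_insert_of_notMem hat, prod_insert hat, Nat.cast_add_one, ← eq_sub_iff_add_eq,
    mul_ite, mul_zero]

lemma sum_powersetCard_filter_mem_prod [CommSemiring R] [DecidableEq ι] {x : ι → R} {a : ι}
    (ha : a ∈ s) (m : ℕ) :
    ∑ t ∈ s.powersetCard m with a ∈ t, ∏ i ∈ t, x i = x a * elemSymm (s.erase a) x (m - 1) := by
  rw [powersetCard_eq_filter, filter_filter]
  conv_lhs => rw [← insert_erase ha]
  simp only [elemSymm, sum_filter, sum_powerset_insert (notMem_erase a s), mul_sum]
  rw [sum_eq_zero fun t ht => if_neg fun h => notMem_erase a s (mem_powerset.1 ht h.2), zero_add]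
  refine sum_congr rfl fun t ht => ?_
  have hat : a ∉ t := fun h => notMem_erase a s (mem_powerset.1 ht h)
  simp only [card_insert_of_notMem hat, prod_insert hat, mem_insert_self, and_true, mul_ite,
    mul_zero]
  congr 1
  simp only [eq_iff_iff]
  omega

lemma elemSymm_pos [CommSemiring R] [PartialOrder R] [IsStrictOrderedRing R] {x : ι → R}
    (hx : ∀ i ∈ s, 0 < x i) {m : ℤ} (hm : 0 ≤ m) (hms : m ≤ #s) : 0 < elemSymm s x m := by
  obtain ⟨t₀, ht₀s, ht₀⟩ := exists_subset_card_eq (s := s) (n := m.toNat) (by omega)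
  exact sum_pos (fun t ht => prod_pos fun i hi => hx i (mem_powerset.1 (mem_filter.1 ht).1 hi))
    ⟨t₀, mem_filter.2 ⟨mem_powerset.2 ht₀s, by omega⟩⟩

theorem elemSymm_mul_le_mul [CommRing R] [LinearOrder R] [IsStrictOrderedRing R] {x : ι → R}
    (hx : ∀ i ∈ s, 0 ≤ x i) {p q r u : ℤ} (hsum : p + u = q + r) (hpq : p ≤ q) (hpr : p ≤ r) :
    elemSymm s x p * elemSymm s x u ≤ elemSymm s x q * elemSymm s x r := by
  classical
  induction s using Finset.induction_on generalizing p q r u with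
  | empty =>
    simp only [elemSymm_empty, mul_ite, mul_one, mul_zero]
    split_ifs <;> first | rfl | omega | exact zero_le_one
  | insert a s ha ih =>
    have hx' : ∀ i ∈ s, 0 ≤ x i := fun i hi => hx i (mem_insert_of_mem hi)
    have hxa : 0 ≤ x a := hx a (mem_insert_self a s)
    rcases hpq.eq_or_lt with rfl | hpq
    · obtain rfl : u = r := by omega
      rfl
    rcases hpr.eq_or_lt with rfl | hpr
    · obtain rfl : u = q := by omega
      exact (mul_comm _ _).le
    have h₀ := ih hx' hsum hpq.le hpr.le
    have h₁ := ih hx' (p := p) (q := q) (r := r - 1) (u := u - 1) (by omega) hpq.le (by omega)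
    have h₂ := ih hx' (p := p - 1) (q := q - 1) (r := r) (u := u) (by omega) (by omega) (by omega)
    have h₃ := ih hx' (p := p - 1) (q := q - 1) (r := r - 1) (u := u - 1) (by omega) (by omega)
      (by omega)
    simp only [elemSymm_insert ha]
    linear_combination h₀ + x a * (h₁ + h₂) + x a ^ 2 * h₃

lemma elemSymm_erase_mul_le [CommRing R] [LinearOrder R] [IsStrictOrderedRing R] [DecidableEq ι]
    {x : ι → R} (hx : ∀ i ∈ s, 0 ≤ x i) {a : ι} (ha : a ∈ s) {l k : ℤ} (hlk : l ≤ k) :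
    elemSymm (s.erase a) x (l - 1) * elemSymm s x k ≤
      elemSymm s x l * elemSymm (s.erase a) x (k - 1) := by
  have hs : ∀ m,
      elemSymm s x m = elemSymm (s.erase a) x m + x a * elemSymm (s.erase a) x (m - 1) :=
    fun m => by rw [← elemSymm_insert (notMem_erase a s), insert_erase ha]
  have h := elemSymm_mul_le_mul (s := s.erase a) (fun i hi => hx i (mem_of_mem_erase hi))
    (p := l - 1) (q := l) (r := k - 1) (u := k) (by ring) (by omega) (by omega)
  rw [hs k, hs l]
  linear_combination h

end elemSymm

lemma det_diagonal_add_vecMulVec {K κ : Type*} [Field K] [Fintype κ] [DecidableEq κ]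
    {e : κ → K} (he : ∀ i, e i ≠ 0) (u v : κ → K) :
    (diagonal e + vecMulVec u v).det = (∏ i, e i) * (1 + ∑ i, u i * v i / e i) := by
  have hdet : IsUnit (diagonal e).det := by
    rw [det_diagonal]; exact (prod_ne_zero_iff.2 fun i _ => he i).isUnit
  have hinv : (diagonal e)⁻¹ = diagonal fun i => (e i)⁻¹ :=
    inv_eq_left_inv (by simp [diagonal_mul_diagonal, he])
  rw [vecMulVec_eq Unit, det_add_replicateCol_mul_replicateRow hdet, det_diagonal, hinv,
    det_unique]
  congr 1
  simp only [Matrix.add_apply, one_apply_eq, mul_apply, replicateRow_apply, replicateCol_apply,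
    diagonal_apply, mul_ite, mul_zero, sum_ite_eq', mem_univ, if_true, add_right_inj]
  exact sum_congr rfl fun j _ => by ring

lemma det_submatrix_diagonal_add_smul_vecMulVec {ι : Type*} [DecidableEq ι] {d : ι → ℝ}
    (hd : ∀ i, d i ≠ 0) (c : ℝ) (w : ι → ℂ) (S : Finset ι) :
    ((diagonal (fun i => (d i : ℂ)) + c • vecMulVec w (star w)).submatrix
      ((↑) : S → ι) ((↑) : S → ι)).det =
      ((∏ i ∈ S, d i) * (1 + ∑ i ∈ S, c * Complex.normSq (w i) / d i) : ℝ) := by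
  have hsub : (diagonal (fun i => (d i : ℂ)) + c • vecMulVec w (star w)).submatrix
      ((↑) : S → ι) ((↑) : S → ι) = diagonal (fun i : S => (d i : ℂ)) +
        vecMulVec (fun i : S => c • w i) (fun i : S => star (w i)) := by
    ext i j
    simp [diagonal_apply, vecMulVec_apply, mul_assoc]
  rw [hsub, det_diagonal_add_vecMulVec (e := fun i : S => (d i : ℂ))
    (fun i => Complex.ofReal_ne_zero.2 (hd i))]
  push_cast
  rw [← prod_coe_sort S, ← sum_coe_sort S]
  congr 2
  refine sum_congr rfl fun i _ => ?_
  rw [Complex.real_smul, mul_assoc, Complex.star_def, Complex.mul_conj]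

lemma unitary_mul_vecMulVec_mul_star {ι : Type*} [Fintype ι] [DecidableEq ι] {U : Matrix ι ι ℂ}
    (hU : U ∈ unitaryGroup ι ℂ) (v : ι → ℂ) :
    U * vecMulVec (star U *ᵥ v) (star (star U *ᵥ v)) * star U = vecMulVec v (star v) := by
  rw [mul_vecMulVec, vecMulVec_mul, mulVec_mulVec, star_mulVec, vecMul_vecMul,
    ← star_eq_conjTranspose, star_star, (mem_unitaryGroup_iff).1 hU, one_mulVec, vecMul_one]

lemma Matrix.IsHermitian.eq_sum_smul_vecMulVec {ι 𝕜 : Type*} [Fintype ι] [DecidableEq ι]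
    [RCLike 𝕜] {A : Matrix ι ι 𝕜} (hA : A.IsHermitian) :
    A = ∑ i, hA.eigenvalues i •
      vecMulVec ⇑(hA.eigenvectorBasis i) (star ⇑(hA.eigenvectorBasis i)) := by
  conv_lhs => rw [hA.spectral_theorem, Unitary.conjStarAlgAut_apply]
  ext a b
  simp only [mul_apply, sum_apply, smul_apply, vecMulVec_apply, diagonal_apply, star_apply,
    IsHermitian.eigenvectorUnitary_apply, Function.comp_apply, mul_ite, mul_zero, sum_ite_eq',
    mem_univ, if_true, Pi.star_apply, RCLike.real_smul_eq_coe_mul]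
  exact sum_congr rfl fun j _ => by ring

section esymm

variable {ι : Type*} [Fintype ι] [DecidableEq ι]

lemma esymm_eq_of_charpoly_eq {M N : Matrix ι ι ℂ} (h : M.charpoly = N.charpoly) (k : ℕ) :
    esymm M k = esymm N k := by
  unfold esymm
  congr 1
  by_cases hk : k ≤ Fintype.card ι
  · refine mul_left_cancel₀ (pow_ne_zero k (neg_ne_zero.2 one_ne_zero)) ?_
    rw [← charpoly_coeff_eq_sum_minors M k hk, ← charpoly_coeff_eq_sum_minors N k hk, h]
  · rw [powersetCard_eq_empty.2 (by simpa using hk), sum_empty, sum_empty]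

lemma esymm_unitary_conj {U : Matrix ι ι ℂ} (hU : U ∈ unitaryGroup ι ℂ) (M : Matrix ι ι ℂ)
    (k : ℕ) : esymm (U * M * star U) k = esymm M k := by
  refine esymm_eq_of_charpoly_eq ?_ k
  rw [charpoly_mul_comm, ← Matrix.mul_assoc, (mem_unitaryGroup_iff').1 hU, Matrix.one_mul]

lemma esymm_diagonal (d : ι → ℝ) (k : ℕ) :
    esymm (diagonal fun i => (d i : ℂ)) k = elemSymm univ d k := by
  rw [esymm, elemSymm_natCast, ← Complex.ofReal_re (∑ t ∈ _, _)]
  push_cast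
  congr 1
  refine sum_congr rfl fun t _ => ?_
  rw [submatrix_diagonal _ _ Subtype.val_injective, det_diagonal]
  exact prod_coe_sort t fun i => (d i : ℂ)

lemma esymm_diagonal_add_smul_vecMulVec {d : ι → ℝ} (hd : ∀ i, d i ≠ 0) (c : ℝ) (w : ι → ℂ)
    (m : ℕ) :
    esymm (diagonal (fun i => (d i : ℂ)) + c • vecMulVec w (star w)) m =
      elemSymm univ d m + c * ∑ i, Complex.normSq (w i) * elemSymm (univ.erase i) d (m - 1) := by
  simp only [esymm, det_submatrix_diagonal_add_smul_vecMulVec hd, ← Complex.ofReal_sum,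
    Complex.ofReal_re, mul_add, mul_one, sum_add_distrib, mul_sum]
  rw [elemSymm_natCast]
  congr 1
  rw [sum_comm' (t' := univ) (s' := fun i => (univ.powersetCard m).filter (i ∈ ·)) (by simp)]
  refine sum_congr rfl fun i _ => ?_
  rw [← sum_mul, sum_powersetCard_filter_mem_prod (mem_univ i)]
  field_simp [hd i]

lemma Matrix.IsHermitian.esymm_eq_elemSymm_eigenvalues {A : Matrix ι ι ℂ} (hA : A.IsHermitian)
    (k : ℕ) : esymm A k = elemSymm univ hA.eigenvalues k := by
  conv_lhs => rw [hA.spectral_theorem, Unitary.conjStarAlgAut_apply]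
  exact (esymm_unitary_conj hA.eigenvectorUnitary.2 _ k).trans (esymm_diagonal _ k)

lemma Matrix.PosDef.esymm_pos {A : Matrix ι ι ℂ} (hA : A.PosDef) {k : ℕ}
    (hk : k ≤ Fintype.card ι) : 0 < esymm A k := by
  rw [hA.1.esymm_eq_elemSymm_eigenvalues]
  exact elemSymm_pos (fun i _ => hA.eigenvalues_pos i) k.cast_nonneg (by simpa using hk)

lemma Matrix.PosDef.esymm_add_smul_vecMulVec {A : Matrix ι ι ℂ} (hA : A.PosDef) (c : ℝ)
    (v : ι → ℂ) (m : ℕ) :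
    esymm (A + c • vecMulVec v (star v)) m =
      elemSymm univ hA.1.eigenvalues m + c * ∑ i,
        Complex.normSq ((star (hA.1.eigenvectorUnitary : Matrix ι ι ℂ) *ᵥ v) i) *
          elemSymm (univ.erase i) hA.1.eigenvalues (m - 1) := by
  set U := (hA.1.eigenvectorUnitary : Matrix ι ι ℂ)
  have hconj : A + c • vecMulVec v (star v) = U * (diagonal (fun i => (hA.1.eigenvalues i : ℂ)) +
      c • vecMulVec (star U *ᵥ v) (star (star U *ᵥ v))) * star U := by
    rw [Matrix.mul_add, Matrix.add_mul, Matrix.mul_smul, Matrix.smul_mul,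
      unitary_mul_vecMulVec_mul_star hA.1.eigenvectorUnitary.2]
    congr 1
    exact hA.1.spectral_theorem
  rw [hconj, esymm_unitary_conj hA.1.eigenvectorUnitary.2,
    esymm_diagonal_add_smul_vecMulVec fun i => (hA.eigenvalues_pos i).ne']

lemma Matrix.PosDef.esymm_div_esymm_add_smul_vecMulVec_le {A : Matrix ι ι ℂ} (hA : A.PosDef)
    {c : ℝ} (hc : 0 ≤ c) (v : ι → ℂ) {l k : ℕ} (hlk : l ≤ k) (hk : k ≤ Fintype.card ι) :
    esymm (A + c • vecMulVec v (star v)) l / esymm (A + c • vecMulVec v (star v)) k ≤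
      esymm A l / esymm A k := by
  have hA' : (A + c • vecMulVec v (star v)).PosDef :=
    hA.add_posSemidef ((posSemidef_vecMulVec_self_star v).smul hc)
  rw [div_le_div_iff₀ (hA'.esymm_pos hk) (hA.esymm_pos hk), hA.esymm_add_smul_vecMulVec,
    hA.esymm_add_smul_vecMulVec, hA.1.esymm_eq_elemSymm_eigenvalues,
    hA.1.esymm_eq_elemSymm_eigenvalues]
  set μ := hA.1.eigenvalues
  set w := star (hA.1.eigenvectorUnitary : Matrix ι ι ℂ) *ᵥ v
  have key : (∑ i, Complex.normSq (w i) * elemSymm (univ.erase i) μ (l - 1)) * elemSymm univ μ k ≤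
      elemSymm univ μ l * ∑ i, Complex.normSq (w i) * elemSymm (univ.erase i) μ (k - 1) := by
    rw [sum_mul, mul_sum]
    refine sum_le_sum fun i _ => ?_
    have h := elemSymm_erase_mul_le (fun j _ => (hA.eigenvalues_pos j).le) (mem_univ i)
      (Int.ofNat_le.2 hlk)
    have hw := Complex.normSq_nonneg (w i)
    linear_combination Complex.normSq (w i) * h
  linear_combination c * key

lemma Matrix.PosDef.esymm_div_esymm_add_sum_le {κ : Type*} (s : Finset κ) {A : Matrix ι ι ℂ}
    (hA : A.PosDef) {c : κ → ℝ} (hc : ∀ j ∈ s, 0 ≤ c j) (v : κ → ι → ℂ) {l k : ℕ} (hlk : l ≤ k)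
    (hk : k ≤ Fintype.card ι) :
    esymm (A + ∑ j ∈ s, c j • vecMulVec (v j) (star (v j))) l /
        esymm (A + ∑ j ∈ s, c j • vecMulVec (v j) (star (v j))) k ≤
      esymm A l / esymm A k := by
  classical
  induction s using Finset.induction_on generalizing A with
  | empty => simp
  | insert j s hj ih =>
    have hcj := hc j (mem_insert_self j s)
    rw [sum_insert hj, ← add_assoc]
    exact (ih (hA.add_posSemidef ((posSemidef_vecMulVec_self_star (v j)).smul hcj))
      fun i hi => hc i (mem_insert_of_mem hi)).trans
      (hA.esymm_div_esymm_add_smul_vecMulVec_le hcj (v j) hlk hk)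

end esymm

theorem stmt5_general (n l k : ℕ) (hlk : l ≤ k) (hkn : k ≤ n)
    (A B : Matrix (Fin n) (Fin n) ℂ) (hA : A.PosDef)
    (hAB : (B - A).PosSemidef) :
    esymm B l / esymm B k ≤ esymm A l / esymm A k := by
  have h := hA.esymm_div_esymm_add_sum_le univ (fun j _ => hAB.eigenvalues_nonneg j)
    (fun j => ⇑(hAB.1.eigenvectorBasis j)) hlk (by simpa using hkn)
  rwa [← hAB.1.eq_sum_smul_vecMulVec, add_sub_cancel] at h

/-- Lemma 6.2 (1): for `0 ≤ l ≤ k ≤ n`, the map `A ↦ σ_l(A) / σ_k(A)` is monotone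
decreasing in the Loewner order on positive definite Hermitian matrices. -/
theorem stmt5 (n l k : ℕ) (hlk : l ≤ k) (hkn : k ≤ n)
    (A B : Matrix (Fin n) (Fin n) ℂ) (hA : A.PosDef) (hB : B.PosDef)
    (hAB : (B - A).PosSemidef) :
    esymm B l / esymm B k ≤ esymm A l / esymm A k :=
  stmt5_general n l k hlk hkn A B hA hAB
end

section
/- Let 0 ≤ r ≤ l ≤ k ≤ n be integers, let A be an n×n positive definite Hermitian complex matrix, and let U be an n×(n−r) complex matrix with Uᴴ U equal to the (n−r)×(n−r) identity (so the columns of U form an orthonormal basis of an (n−r)-dimensional subspace H, and Uᴴ A U represents the compression A|_H of A to H). Then σ_{l−r}(Uᴴ A U)/σ_{k−r}(Uᴴ A U) ≤ σ_l(A)/σ_k(A). (Lemma 6.2 (2).) -/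
open Matrix ComplexOrder

/-!
Let `λ` and `μ` be the eigenvalues of `A` and of the compression `B = Uᴴ A U`, in decreasing
order. By Vieta, `σ_j(A) = e_j(λ)` and `σ_j(B) = e_j(μ)`, and Cauchy interlacing gives
`λ_{i+r} ≤ μ_i`. Telescoping, the claim reduces to comparing consecutive quotients:
`e_{j+1}(λ)/e_j(λ) ≤ e_{j-r+1}(μ)/e_{j-r}(μ)` for `l ≤ j < k`. Split `λ` into its top `r`
entries `c` and the rest `λ'`, which is dominated entrywise by `μ`. Newton's inequality
`e_i e_{i+2} ≤ e_{i+1}²` for nonnegative entries gives both steps: adjoining an entry to a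
multiset and shifting the index by one lowers the quotient (apply this `r` times to pass from
`λ = c + λ'` to `λ'`), and the quotient is increasing in each entry (pass from `λ'` to `μ`).
-/

open Module Submodule RCLike
open scoped InnerProductSpace

theorem div_le_div_of_forall_div_succ_le {R : Type*} [Field R] [LinearOrder R]
    [IsStrictOrderedRing R] {f g : ℕ → R} {l k : ℕ} (hlk : l ≤ k) (hf : ∀ j ≤ k, 0 < f j)
    (hg : ∀ j ≤ k, 0 < g j) (h : ∀ j, l ≤ j → j < k → f (j + 1) / f j ≤ g (j + 1) / g j) :
    g l / g k ≤ f l / f k := by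
  induction k, hlk using Nat.le_induction with
  | base => rw [div_self (hg l le_rfl).ne', div_self (hf l le_rfl).ne']
  | succ k hlk ih =>
    have ih := ih (fun j hj ↦ hf j (by omega)) (fun j hj ↦ hg j (by omega))
      (fun j hlj hjk ↦ h j hlj (by omega))
    have := hf k (by omega)
    have := hf (k + 1) le_rfl
    have := hg k (by omega)
    have := hg (k + 1) le_rfl
    have := hf l (by omega)
    calc g l / g (k + 1) = g l / g k / (g (k + 1) / g k) := by field_simp
      _ ≤ f l / f k / (f (k + 1) / f k) :=
        div_le_div₀ (by positivity) ih (by positivity) (h k hlk (by omega))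
      _ = f l / f (k + 1) := by field_simp

namespace Multiset

theorem forall_pos_of_rel_le {α : Type*} [Zero α] [Preorder α] {s t : Multiset α}
    (hs : ∀ x ∈ s, 0 < x) (hst : Rel (· ≤ ·) s t) : ∀ y ∈ t, 0 < y := fun _ hy ↦
  let ⟨_, hx, hxy⟩ := exists_mem_of_rel_of_mem (rel_flip.2 hst) hy
  (hs _ hx).trans_le hxy

section CommSemiring

variable {R : Type*} [CommSemiring R]

theorem esymm_zero (s : Multiset R) : s.esymm 0 = 1 := by
  simp [esymm]

theorem esymm_cons_succ (a : R) (s : Multiset R) (k : ℕ) :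
    (a ::ₘ s).esymm (k + 1) = a * s.esymm k + s.esymm (k + 1) := by
  simp only [esymm, powersetCard_cons, map_add, sum_add, map_map, Function.comp_def, prod_cons,
    sum_map_mul_left, add_comm]

theorem esymm_eq_zero_of_card_lt {s : Multiset R} {k : ℕ} (h : card s < k) : s.esymm k = 0 := by
  simp [esymm, powersetCard_eq_empty k h]

theorem esymm_map_ringHom {S : Type*} [CommSemiring S] (f : R →+* S) (s : Multiset R) (k : ℕ) :
    (s.map f).esymm k = f (s.esymm k) := by
  simp [esymm, powersetCard_map, map_multiset_sum, map_multiset_prod, map_map]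

end CommSemiring

section Field

variable {R : Type*} [Field R]

/-- For positive entries this is `0` exactly when `card s ≤ i`; with this convention the
comparison lemmas below hold for every index `i`. -/
noncomputable def esymmRatio (s : Multiset R) (i : ℕ) : R :=
  s.esymm (i + 1) / s.esymm i

theorem esymmRatio_eq_zero_of_card_le {s : Multiset R} {i : ℕ} (h : card s ≤ i) :
    esymmRatio s i = 0 := by
  rw [esymmRatio, esymm_eq_zero_of_card_lt (Nat.lt_succ_of_le h), zero_div]

end Field

variable {R : Type*} [Field R] [LinearOrder R] [IsStrictOrderedRing R] {s t : Multiset R}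

theorem esymm_nonneg (hs : ∀ x ∈ s, 0 ≤ x) (k : ℕ) : 0 ≤ s.esymm k :=
  sum_nonneg fun _ hx ↦ by
    obtain ⟨u, hu, rfl⟩ := mem_map.1 hx
    exact prod_nonneg fun x hx ↦ hs x (subset_of_le (mem_powersetCard.1 hu).1 hx)

theorem esymm_pos (hs : ∀ x ∈ s, 0 < x) {k : ℕ} (hk : k ≤ card s) : 0 < s.esymm k := by
  induction s using Multiset.induction generalizing k with
  | empty => simp_all [esymm_zero]
  | cons a s ih =>
    cases k with
    | zero => simp [esymm_zero]
    | succ k =>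
      rw [esymm_cons_succ]
      have hs' : ∀ x ∈ s, 0 < x := fun x hx ↦ hs x (mem_cons_of_mem hx)
      have := esymm_nonneg (fun x hx ↦ (hs' x hx).le) (k + 1)
      have := mul_pos (hs a (mem_cons_self a s)) (ih hs' (by simpa using hk))
      linarith

/-- An unnormalised form of Newton's inequalities; the staggered indices make the induction
on `s` go through. -/
theorem esymm_mul_esymm_succ_le (hs : ∀ x ∈ s, 0 ≤ x) {p q : ℕ} (hpq : p ≤ q) :
    s.esymm p * s.esymm (q + 1) ≤ s.esymm (p + 1) * s.esymm q := by
  induction s using Multiset.induction generalizing p q with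
  | empty =>
    simp [esymm_eq_zero_of_card_lt (s := (0 : Multiset R)) (Nat.succ_pos _)]
  | cons a s ih =>
    have ha := hs a (mem_cons_self a s)
    have ih := @ih fun x hx ↦ hs x (mem_cons_of_mem hx)
    have e := esymm_nonneg fun x hx ↦ hs x (mem_cons_of_mem hx)
    rcases q with _ | q
    · obtain rfl : p = 0 := by omega
      rw [mul_comm]
    rcases p with _ | p
    · have h0 := ih (Nat.zero_le (q + 1))
      simp only [esymm_zero, one_mul, esymm_cons_succ] at h0 ⊢
      nlinarith [mul_nonneg (mul_nonneg ha ha) (e q), mul_nonneg (mul_nonneg ha (e 1)) (e q),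
        mul_nonneg (e 1) (e (q + 1))]
    simp only [esymm_cons_succ]
    rcases (Nat.succ_le_succ_iff.1 hpq).eq_or_lt with rfl | hlt
    · rw [mul_comm]
    · nlinarith [mul_nonneg (mul_nonneg ha ha) (sub_nonneg.2 (ih (p := p) (q := q) (by omega))),
        mul_nonneg ha (sub_nonneg.2 (ih (p := p) (q := q + 1) (by omega))),
        mul_nonneg ha (sub_nonneg.2 (ih (p := p + 1) (q := q) hlt)),
        ih (p := p + 1) (q := q + 1) (by omega)]

theorem esymm_mul_esymm_add_two_le_sq (hs : ∀ x ∈ s, 0 ≤ x) (i : ℕ) :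
    s.esymm i * s.esymm (i + 2) ≤ s.esymm (i + 1) ^ 2 := by
  simpa [sq] using esymm_mul_esymm_succ_le hs (Nat.le_succ i)

theorem esymmRatio_nonneg (hs : ∀ x ∈ s, 0 ≤ x) (i : ℕ) : 0 ≤ esymmRatio s i :=
  div_nonneg (esymm_nonneg hs _) (esymm_nonneg hs _)

theorem esymmRatio_cons_le_cons (ht : ∀ x ∈ t, 0 < x) {a b : R} (ha : 0 < a) (hab : a ≤ b)
    (i : ℕ) : esymmRatio (a ::ₘ t) i ≤ esymmRatio (b ::ₘ t) i := by
  have ht' x (hx : x ∈ t) : 0 ≤ x := (ht x hx).le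
  have hb : 0 < b := ha.trans_le hab
  rcases lt_or_ge (card t) i with hi | hi
  · rw [esymmRatio_eq_zero_of_card_le (by simpa using hi)]
    exact esymmRatio_nonneg (by simpa [hb.le] using ht') i
  have hpos {c} (hc : 0 < c) : 0 < (c ::ₘ t).esymm i :=
    esymm_pos (by simpa [hc] using ht) (by simp; omega)
  rw [esymmRatio, esymmRatio, div_le_div_iff₀ (hpos ha) (hpos hb)]
  rcases i with _ | i
  · simp [esymm_zero, esymm_cons_succ, hab]
  simp only [esymm_cons_succ]
  nlinarith [mul_nonneg (sub_nonneg.2 hab) (sub_nonneg.2 (esymm_mul_esymm_add_two_le_sq ht' i))]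

theorem esymmRatio_cons_succ_le (ht : ∀ x ∈ t, 0 < x) {a : R} (ha : 0 ≤ a) (i : ℕ) :
    esymmRatio (a ::ₘ t) (i + 1) ≤ esymmRatio t i := by
  have ht' x (hx : x ∈ t) : 0 ≤ x := (ht x hx).le
  rcases lt_or_ge i (card t) with hi | hi
  · have hti : 0 < t.esymm i := esymm_pos ht hi.le
    have hati : 0 < (a ::ₘ t).esymm (i + 1) := by
      rw [esymm_cons_succ]
      exact add_pos_of_nonneg_of_pos (mul_nonneg ha hti.le) (esymm_pos ht hi)
    rw [esymmRatio, esymmRatio, div_le_div_iff₀ hati hti, esymm_cons_succ, esymm_cons_succ]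
    nlinarith [esymm_mul_esymm_add_two_le_sq ht' i]
  · rw [esymmRatio_eq_zero_of_card_le hi, esymmRatio_eq_zero_of_card_le (by simpa using hi)]

theorem esymmRatio_add_le {c : Multiset R} (hc : ∀ x ∈ c, 0 < x) (hs : ∀ x ∈ s, 0 < x)
    (i : ℕ) : esymmRatio (c + s) (card c + i) ≤ esymmRatio s i := by
  induction c using Multiset.induction with
  | empty => simp
  | cons a c ih =>
    have hc' : ∀ x ∈ c, 0 < x := fun x hx ↦ hc x (mem_cons_of_mem hx)
    calc esymmRatio (a ::ₘ c + s) (card (a ::ₘ c) + i)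
        = esymmRatio (a ::ₘ (c + s)) (card c + i + 1) := by
          rw [cons_add, card_cons, Nat.add_right_comm]
      _ ≤ esymmRatio (c + s) (card c + i) := by
          refine esymmRatio_cons_succ_le (fun x hx ↦ ?_) (hc a (mem_cons_self a c)).le _
          rcases mem_add.1 hx with hx | hx
          exacts [hc' x hx, hs x hx]
      _ ≤ esymmRatio s i := ih hc'

theorem esymmRatio_le_of_rel_le (hs : ∀ x ∈ s, 0 < x) (hst : Rel (· ≤ ·) s t) (i : ℕ) :
    esymmRatio s i ≤ esymmRatio t i := by
  suffices ∀ c : Multiset R, (∀ x ∈ c, 0 < x) → esymmRatio (c + s) i ≤ esymmRatio (c + t) i by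
    simpa using this 0 (by simp)
  induction hst with
  | zero => exact fun _ _ ↦ le_rfl
  | @cons x y s t hxy hst ih =>
    intro c hc
    have hx : 0 < x := hs x (mem_cons_self x s)
    have hs : ∀ x ∈ s, 0 < x := fun x hx ↦ hs x (mem_cons_of_mem hx)
    have hct : ∀ z ∈ c + t, 0 < z := fun z hz ↦
      (mem_add.1 hz).elim (hc z) (forall_pos_of_rel_le hs hst z)
    calc esymmRatio (c + x ::ₘ s) i = esymmRatio (x ::ₘ c + s) i := by rw [add_cons, cons_add]
      _ ≤ esymmRatio (x ::ₘ c + t) i := ih hs _ (forall_mem_cons.2 ⟨hx, hc⟩)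
      _ = esymmRatio (x ::ₘ (c + t)) i := by rw [cons_add]
      _ ≤ esymmRatio (y ::ₘ (c + t)) i := esymmRatio_cons_le_cons hct hx hxy i
      _ = esymmRatio (c + y ::ₘ t) i := by rw [add_cons]

theorem esymm_div_esymm_le_of_le_natAdd {r m : ℕ} {a : Fin (r + m) → R} {b : Fin m → R}
    (ha : ∀ i, 0 < a i) (hab : ∀ i, a (Fin.natAdd r i) ≤ b i) {l k : ℕ} (hrl : r ≤ l)
    (hlk : l ≤ k) (hk : k ≤ r + m) :
    (Finset.univ.val.map b).esymm (l - r) / (Finset.univ.val.map b).esymm (k - r) ≤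
      (Finset.univ.val.map a).esymm l / (Finset.univ.val.map a).esymm k := by
  set c : Multiset R := Finset.univ.val.map fun i : Fin r ↦ a (Fin.castLE (by omega) i)
  set s : Multiset R := Finset.univ.val.map fun i : Fin m ↦ a (Fin.natAdd r i)
  set t : Multiset R := Finset.univ.val.map b
  have hsplit : Finset.univ.val.map a = c + s := by
    simp only [c, s, Fin.univ_val_map, List.ofFn_add, coe_add]
  have hc : ∀ x ∈ c, 0 < x := by simp [c, ha]
  have hs : ∀ x ∈ s, 0 < x := by simp [s, ha]
  have hcs : ∀ x ∈ c + s, 0 < x := fun x hx ↦ (mem_add.1 hx).elim (hc x) (hs x)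
  have hst : Rel (· ≤ ·) s t := rel_map.2 (rel_refl_of_refl_on fun i _ ↦ hab i)
  obtain ⟨l, rfl⟩ := Nat.exists_eq_add_of_le hrl
  obtain ⟨k, rfl⟩ := Nat.exists_eq_add_of_le (hrl.trans hlk)
  have hcard : card c = r := by simp [c]
  rw [Nat.add_sub_cancel_left, Nat.add_sub_cancel_left, hsplit, ← hcard]
  refine div_le_div_of_forall_div_succ_le (f := fun j ↦ (c + s).esymm (card c + j)) (by omega)
    (fun j hj ↦ esymm_pos hcs (by simp [c, s]; omega))
    (fun j hj ↦ esymm_pos (forall_pos_of_rel_le hs hst) (by simp [t]; omega))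
    (fun j _ _ ↦ (esymmRatio_add_le hc hs j).trans (esymmRatio_le_of_rel_le hs hst j))

end Multiset

section Orthonormal

variable {𝕜 E ι : Type*} [RCLike 𝕜] [NormedAddCommGroup E] [InnerProductSpace 𝕜 E]
  [Fintype ι] {v : ι → E} {T : E →ₗ[𝕜] E} {μ : ι → ℝ}

theorem Orthonormal.re_inner_map_sum_smul (hv : Orthonormal 𝕜 v)
    (hT : ∀ i, T (v i) = (μ i : 𝕜) • v i) (c : ι → 𝕜) :
    re ⟪T (∑ i, c i • v i), ∑ i, c i • v i⟫_𝕜 = ∑ i, μ i * ‖c i‖ ^ 2 := by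
  have hTc : T (∑ i, c i • v i) = ∑ i, ((μ i : 𝕜) * c i) • v i := by
    simp [map_sum, hT, smul_smul, mul_comm]
  rw [hTc, hv.inner_sum, map_sum]
  refine Finset.sum_congr rfl fun i _ ↦ ?_
  rw [(starRingEnd 𝕜).map_mul, conj_ofReal, mul_assoc, RCLike.conj_mul, ← ofReal_pow,
    ← ofReal_mul, ofReal_re]

theorem Orthonormal.norm_sum_smul_sq (hv : Orthonormal 𝕜 v) (c : ι → 𝕜) :
    ‖∑ i, c i • v i‖ ^ 2 = ∑ i, ‖c i‖ ^ 2 := by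
  simpa using hv.re_inner_map_sum_smul (T := LinearMap.id) (μ := 1) (by simp) c

theorem Orthonormal.mul_norm_sq_le_re_inner_of_mem_span (hv : Orthonormal 𝕜 v)
    (hT : ∀ i, T (v i) = (μ i : 𝕜) • v i) {θ : ℝ} (hθ : ∀ i, θ ≤ μ i) {x : E}
    (hx : x ∈ span 𝕜 (Set.range v)) : θ * ‖x‖ ^ 2 ≤ re ⟪T x, x⟫_𝕜 := by
  obtain ⟨c, rfl⟩ := (mem_span_range_iff_exists_fun 𝕜).1 hx
  rw [hv.re_inner_map_sum_smul hT, hv.norm_sum_smul_sq, Finset.mul_sum]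
  exact Finset.sum_le_sum fun i _ ↦ mul_le_mul_of_nonneg_right (hθ i) (sq_nonneg _)

theorem Orthonormal.re_inner_le_mul_norm_sq_of_mem_span (hv : Orthonormal 𝕜 v)
    (hT : ∀ i, T (v i) = (μ i : 𝕜) • v i) {θ : ℝ} (hθ : ∀ i, μ i ≤ θ) {x : E}
    (hx : x ∈ span 𝕜 (Set.range v)) : re ⟪T x, x⟫_𝕜 ≤ θ * ‖x‖ ^ 2 := by
  obtain ⟨c, rfl⟩ := (mem_span_range_iff_exists_fun 𝕜).1 hx
  rw [hv.re_inner_map_sum_smul hT, hv.norm_sum_smul_sq, Finset.mul_sum]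
  exact Finset.sum_le_sum fun i _ ↦ mul_le_mul_of_nonneg_right (hθ i) (sq_nonneg _)

end Orthonormal

theorem exists_ne_zero_mem_span_range_of_finrank_lt {K V ι κ : Type*} [DivisionRing K]
    [AddCommGroup V] [Module K V] [FiniteDimensional K V] [Fintype ι] [Fintype κ] {p : ι → V}
    {q : κ → V} (hp : LinearIndependent K p) (hq : LinearIndependent K q)
    (h : finrank K V < Fintype.card ι + Fintype.card κ) :
    ∃ x ≠ 0, x ∈ span K (Set.range p) ∧ x ∈ span K (Set.range q) := by
  have hdim :=
    Submodule.finrank_sup_add_finrank_inf_eq (span K (Set.range p)) (span K (Set.range q))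
  rw [finrank_span_eq_card hp, finrank_span_eq_card hq] at hdim
  have := Submodule.finrank_le (span K (Set.range p) ⊔ span K (Set.range q))
  have hne : span K (Set.range p) ⊓ span K (Set.range q) ≠ ⊥ := by
    intro hbot
    rw [← Submodule.finrank_eq_zero] at hbot
    omega
  obtain ⟨x, hx, hx0⟩ := Submodule.exists_mem_ne_zero_of_ne_bot hne
  exact ⟨x, hx0, hx⟩

namespace LinearMap.IsSymmetric

variable {𝕜 E F : Type*} [RCLike 𝕜] [NormedAddCommGroup E] [InnerProductSpace 𝕜 E]
  [FiniteDimensional 𝕜 E] [NormedAddCommGroup F] [InnerProductSpace 𝕜 F] [FiniteDimensional 𝕜 F]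
  {T : E →ₗ[𝕜] E} {S : F →ₗ[𝕜] F}

/-- One half of Cauchy's interlacing inequalities. -/
theorem eigenvalues_natAdd_le_of_compression (hT : T.IsSymmetric) (hS : S.IsSymmetric)
    (V : F →ₗᵢ[𝕜] E) (hST : ∀ y, ⟪S y, y⟫_𝕜 = ⟪T (V y), V y⟫_𝕜) {r m : ℕ}
    (hE : finrank 𝕜 E = r + m) (hF : finrank 𝕜 F = m) (i : Fin m) :
    hT.eigenvalues hE (Fin.natAdd r i) ≤ hS.eigenvalues hF i := by
  let p : Fin (r + i + 1) → E := fun j ↦ hT.eigenvectorBasis hE (Fin.castLE (by omega) j)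
  let q : Fin (m - i) → F := fun j ↦ hS.eigenvectorBasis hF ⟨i + j, by omega⟩
  have hp : Orthonormal 𝕜 p :=
    (hT.eigenvectorBasis hE).orthonormal.comp _ (Fin.castLE_injective _)
  have hq : Orthonormal 𝕜 q :=
    (hS.eigenvectorBasis hF).orthonormal.comp _ fun j j' h ↦ by
      simpa [Fin.ext_iff] using h
  -- The top `r + i + 1` eigenvectors of `T` and the image of the bottom `m - i` eigenvectors
  -- of `S` span subspaces of total dimension `r + m + 1`, so they meet.
  obtain ⟨x, hx0, hxp, hxq⟩ := exists_ne_zero_mem_span_range_of_finrank_lt hp.linearIndependent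
    (hq.comp_linearIsometry V).linearIndependent (by simp [hE]; omega)
  obtain ⟨d, hd⟩ := (mem_span_range_iff_exists_fun 𝕜).1 hxq
  set y := ∑ j, d j • q j
  obtain rfl : x = V y := by simp [← hd, y, map_sum]
  have lower : hT.eigenvalues hE (Fin.natAdd r i) * ‖V y‖ ^ 2 ≤ re ⟪T (V y), V y⟫_𝕜 :=
    hp.mul_norm_sq_le_re_inner_of_mem_span (fun j ↦ hT.apply_eigenvectorBasis hE _)
      (fun j ↦ hT.eigenvalues_antitone hE (by simp [Fin.le_def]; omega)) hxp
  have upper : re ⟪S y, y⟫_𝕜 ≤ hS.eigenvalues hF i * ‖y‖ ^ 2 :=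
    hq.re_inner_le_mul_norm_sq_of_mem_span (fun j ↦ hS.apply_eigenvectorBasis hF _)
      (fun j ↦ hS.eigenvalues_antitone hF (by simp [Fin.le_def]))
      ((mem_span_range_iff_exists_fun 𝕜).2 ⟨d, rfl⟩)
  rw [hST] at upper
  rw [V.norm_map] at lower
  have : 0 < ‖y‖ ^ 2 := by
    have : y ≠ 0 := fun h ↦ hx0 (by simp [h])
    positivity
  exact le_of_mul_le_mul_right (lower.trans upper) this

end LinearMap.IsSymmetric

section Matrix

open Polynomial

variable {ι : Type*} [Fintype ι] [DecidableEq ι]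

theorem esymm_eq_esymm_eigenvalues {M : Matrix ι ι ℂ} (hM : (toEuclideanLin M).IsSymmetric)
    {N : ℕ} (hN : finrank ℂ (EuclideanSpace ℂ ι) = N) (j : ℕ) :
    esymm M j = (Finset.univ.val.map (hM.eigenvalues hN)).esymm j := by
  -- For `j ≤ card ι`, both sides are `(-1) ^ j` times the coefficient of `X ^ (card ι - j)`
  -- in the characteristic polynomial of `M`.
  have hcard : Fintype.card ι = N := by simpa using hN
  rcases le_or_gt j (Fintype.card ι) with hj | hj
  · have hchar : M.charpoly = Multiset.prod (Multiset.map (fun t ↦ X - C t)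
        ((Finset.univ.val.map (hM.eigenvalues hN)).map Complex.ofRealHom)) := by
      rw [← charpoly_toLin M (EuclideanSpace.basisFun ι ℂ).toBasis,
        ← toEuclideanLin_eq_toLin_orthonormal, hM.charpoly_eq hN,
        Finset.prod_eq_multiset_prod, Multiset.map_map, Multiset.map_map]
      rfl
    have := M.charpoly_coeff_eq_sum_minors j hj
    rw [hchar, Multiset.prod_X_sub_C_coeff _ (by simp; omega)] at this
    simp only [Multiset.card_map, Finset.card_val, Finset.card_univ, Fintype.card_fin] at this
    rw [show N - (Fintype.card ι - j) = j by omega, Multiset.esymm_map_ringHom] at this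
    rw [esymm, ← mul_left_cancel₀ (pow_ne_zero j (neg_ne_zero.2 one_ne_zero)) this]
    rfl
  · rw [esymm, Finset.powersetCard_eq_empty.2 (by simpa using hj), Multiset.esymm,
      Multiset.powersetCard_eq_empty _ (by simpa [← hcard] using hj)]
    simp

theorem Matrix.PosDef.pos_of_hasEigenvalue_toEuclideanLin {A : Matrix ι ι ℂ} (hA : A.PosDef)
    {μ : ℝ} (hμ : Module.End.HasEigenvalue (toEuclideanLin A) (μ : ℂ)) : 0 < μ := by
  obtain ⟨v, hv, hv0⟩ := hμ.exists_hasEigenvector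
  have hinner : ⟪v, toEuclideanLin A v⟫_ℂ = star (WithLp.ofLp v) ⬝ᵥ (A *ᵥ WithLp.ofLp v) := by
    rw [EuclideanSpace.inner_eq_star_dotProduct, dotProduct_comm]
    rfl
  have hpos := hA.dotProduct_mulVec_pos (x := WithLp.ofLp v) (by simpa using hv0)
  rw [← hinner, inner_product_apply_eigenvector (Module.End.mem_eigenspace_iff.1 hv)] at hpos
  have : 0 < μ * ‖v‖ ^ 2 := Complex.zero_lt_real.1 (by simpa using hpos)
  exact (mul_pos_iff_of_pos_right (by positivity)).1 this

theorem Matrix.inner_toEuclideanLin_conjTranspose_mul_mul {𝕜 m n : Type*} [RCLike 𝕜]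
    [Fintype m] [Fintype n] [DecidableEq m] [DecidableEq n] (A : Matrix m m 𝕜) (U : Matrix m n 𝕜)
    (x y : EuclideanSpace 𝕜 n) :
    ⟪toEuclideanLin (Uᴴ * A * U) x, y⟫_𝕜 =
      ⟪toEuclideanLin A (toEuclideanLin U x), toEuclideanLin U y⟫_𝕜 := by
  rw [Matrix.mul_assoc, toLpLin_mul_same, LinearMap.comp_apply,
    toEuclideanLin_conjTranspose_eq_adjoint, LinearMap.adjoint_inner_left, toLpLin_mul_same,
    LinearMap.comp_apply]

end Matrix

/-- Lemma 6.2 (2): for `0 ≤ r ≤ l ≤ k ≤ n`, a positive definite `A`, and an isometry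
`U` onto an `(n - r)`-dimensional subspace (so `Uᴴ A U` is the compression of `A`),
`σ_{l-r}(Uᴴ A U) / σ_{k-r}(Uᴴ A U) ≤ σ_l(A) / σ_k(A)`. -/
theorem stmt6 (n r l k : ℕ) (hrl : r ≤ l) (hlk : l ≤ k) (hkn : k ≤ n)
    (A : Matrix (Fin n) (Fin n) ℂ) (hA : A.PosDef)
    (U : Matrix (Fin n) (Fin (n - r)) ℂ) (hU : Uᴴ * U = 1) :
    esymm (Uᴴ * A * U) (l - r) / esymm (Uᴴ * A * U) (k - r)
      ≤ esymm A l / esymm A k := by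
  have hE : finrank ℂ (EuclideanSpace ℂ (Fin n)) = r + (n - r) := by simp; omega
  have hF : finrank ℂ (EuclideanSpace ℂ (Fin (n - r))) = n - r := by simp
  have hT := isSymmetric_toEuclideanLin_iff.2 hA.isHermitian
  have hS := isSymmetric_toEuclideanLin_iff.2 (isHermitian_conjTranspose_mul_mul U hA.isHermitian)
  let V := (toEuclideanLin U).isometryOfInner fun x y ↦ by
    simpa [hU] using (inner_toEuclideanLin_conjTranspose_mul_mul 1 U x y).symm
  have hinterlace := hT.eigenvalues_natAdd_le_of_compression hS V
    (fun y ↦ inner_toEuclideanLin_conjTranspose_mul_mul A U y y) hE hF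
  rw [esymm_eq_esymm_eigenvalues hT hE, esymm_eq_esymm_eigenvalues hT hE,
    esymm_eq_esymm_eigenvalues hS hF, esymm_eq_esymm_eigenvalues hS hF]
  exact Multiset.esymm_div_esymm_le_of_le_natAdd
    (fun i ↦ hA.pos_of_hasEigenvalue_toEuclideanLin (hT.hasEigenvalue_eigenvalues hE i))
    hinterlace hrl hlk (by omega)
end

section
/- Let 1 ≤ k ≤ r ≤ n be integers and let A be an n×n positive definite Hermitian complex matrix. Then for every n×n positive semidefinite Hermitian complex matrix B, σ_{r−1}(A) · (d/dt)|_{t=0} σ_k(A + tB) ≥ σ_{k−1}(A) · (d/dt)|_{t=0} σ_r(A + tB). Equivalently, in the Loewner order, σ_{r−1}(A) T_{k−1}(A) ≥ σ_{k−1}(A) T_{r−1}(A), where T_{j−1}(A) is the Hermitian matrix of partial derivatives of σ_j at A. (Lemma 6.2 (3), inequality (6.5).) -/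
/-!
Diagonalise `A = U diag(λ) U*`. Sums of principal minors are (signed) coefficients of the
characteristic polynomial, hence unitarily invariant, so `σ_j(A + tB) = σ_j(diag λ + tC)` with
`C = U* B U` positive semidefinite, and `σ_j(A) = e_j(λ)`. Differentiating the principal minors
of `diag λ + tC` at `t = 0` gives `(d/dt) σ_j = ∑ᵢ Cᵢᵢ e_{j-1}(λ without λᵢ)`. Since `Cᵢᵢ ≥ 0`,
the claim reduces term by term to
`e_{k-1}(λ) e_{r-1}(λ without λᵢ) ≤ e_{r-1}(λ) e_{k-1}(λ without λᵢ)`, which is a consequence of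
the log-concavity `e_a e_{b+1} ≤ e_{a+1} e_b` (`a ≤ b`) of the elementary symmetric functions of
nonnegative reals.
-/

open Matrix ComplexOrder

open Finset

section ElementarySymmetric

variable {ι R : Type*} [CommSemiring R]

def esymmOn (s : Finset ι) (f : ι → R) (j : ℕ) : R :=
  ∑ t ∈ s.powersetCard j, ∏ i ∈ t, f i

@[simp]
lemma esymmOn_zero (s : Finset ι) (f : ι → R) : esymmOn s f 0 = 1 := by
  simp [esymmOn]

@[simp]
lemma esymmOn_empty_succ (f : ι → R) (j : ℕ) : esymmOn ∅ f (j + 1) = 0 := by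
  rw [esymmOn, powersetCard_eq_empty.mpr (by simp), sum_empty]

lemma Complex.ofReal_esymmOn (s : Finset ι) (f : ι → ℝ) (j : ℕ) :
    ((esymmOn s f j : ℝ) : ℂ) = esymmOn s (fun i => (f i : ℂ)) j := by
  simp [esymmOn]

lemma esymmOn_insert [DecidableEq ι] {s : Finset ι} {a : ι} (ha : a ∉ s) (f : ι → R) (j : ℕ) :
    esymmOn (insert a s) f (j + 1) = esymmOn s f (j + 1) + f a * esymmOn s f j := by
  have hnot : ∀ t ∈ s.powersetCard j, a ∉ t := fun t ht hat =>
    ha ((mem_powersetCard.mp ht).1 hat)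
  rw [esymmOn, powersetCard_succ_insert ha, sum_union, sum_image, esymmOn, esymmOn, mul_sum]
  · exact congrArg _ (sum_congr rfl fun t ht => prod_insert (hnot t ht))
  · exact fun t ht t' ht' h => by
      simpa [erase_insert (hnot t ht), erase_insert (hnot t' ht')] using congrArg (·.erase a) h
  · refine disjoint_left.mpr fun t ht ht' => ?_
    obtain ⟨t', -, rfl⟩ := mem_image.mp ht'
    exact ha ((mem_powersetCard.mp ht).1 (mem_insert_self a t'))

lemma sum_powersetCard_sum_mul_prod_erase [Fintype ι] [DecidableEq ι] (c f : ι → R) (m : ℕ) :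
    ∑ s ∈ univ.powersetCard (m + 1), ∑ i ∈ s, c i * ∏ j ∈ s.erase i, f j =
      ∑ i, c i * esymmOn (univ.erase i) f m := by
  simp_rw [esymmOn, mul_sum]
  rw [sum_sigma', sum_sigma']
  refine sum_nbij' (fun x => ⟨x.2, x.1.erase x.2⟩) (fun x => ⟨insert x.1 x.2, x.1⟩)
    ?_ ?_ ?_ ?_ ?_
  · rintro ⟨s, i⟩ h
    simp only [mem_sigma, mem_powersetCard, subset_univ, true_and] at h ⊢
    exact ⟨mem_univ _, erase_subset_erase i (subset_univ s), by simp [card_erase_of_mem h.2, h.1]⟩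
  · rintro ⟨i, t⟩ h
    simp only [mem_sigma, mem_powersetCard, subset_erase] at h ⊢
    exact ⟨⟨subset_univ _, by rw [card_insert_of_notMem h.2.1.2, h.2.2]⟩, mem_insert_self i t⟩
  · rintro ⟨s, i⟩ h
    simp [insert_erase (mem_sigma.mp h).2]
  · rintro ⟨i, t⟩ h
    simp only [mem_sigma, mem_powersetCard, subset_erase] at h
    simp [erase_insert h.2.1.2]
  · rintro ⟨s, i⟩ -
    rfl

end ElementarySymmetric

section LogConcave

variable {ι : Type*} {s : Finset ι} {f : ι → ℝ}

lemma esymmOn_nonneg (hf : ∀ i ∈ s, 0 ≤ f i) (j : ℕ) : 0 ≤ esymmOn s f j :=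
  sum_nonneg fun _ ht => prod_nonneg fun i hi => hf i ((mem_powersetCard.mp ht).1 hi)

variable [DecidableEq ι]

theorem esymmOn_mul_succ_le (hf : ∀ i ∈ s, 0 ≤ f i) {a b : ℕ} (hab : a ≤ b) :
    esymmOn s f a * esymmOn s f (b + 1) ≤ esymmOn s f (a + 1) * esymmOn s f b := by
  induction s using Finset.induction_on generalizing a b with
  | empty => cases a <;> simp
  | @insert x s hx ih =>
    have hx0 : 0 ≤ f x := hf x (mem_insert_self x s)
    have hs : ∀ i ∈ s, 0 ≤ f i := fun i hi => hf i (mem_insert_of_mem hi)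
    have ih := fun {a b : ℕ} (h : a ≤ b) => ih hs h
    have hE := esymmOn_nonneg hs
    cases b with
    | zero => obtain rfl := Nat.le_zero.mp hab; simp
    | succ b =>
    cases a with
    | zero =>
      have h0 : esymmOn s f (b + 2) ≤ esymmOn s f 1 * esymmOn s f (b + 1) := by
        simpa using ih (Nat.zero_le (b + 1))
      simp only [esymmOn_insert hx, esymmOn_zero, one_mul, mul_one, zero_add]
      nlinarith [mul_nonneg hx0 (hE b), mul_nonneg (mul_nonneg hx0 hx0) (hE b),
        mul_nonneg (mul_nonneg hx0 (hE 1)) (hE b)]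
    | succ a =>
      simp only [esymmOn_insert hx]
      have hab : a ≤ b := Nat.le_of_succ_le_succ hab
      -- the coefficient of `f x` in the difference is `e_{a+2} e_b - e_a e_{b+2}`
      have hmid : esymmOn s f a * esymmOn s f (b + 2) ≤ esymmOn s f (a + 2) * esymmOn s f b := by
        rcases hab.lt_or_eq with hlt | rfl
        · exact (ih (Nat.le_succ_of_le hab)).trans (ih hlt)
        · rw [mul_comm]
      nlinarith [ih (Nat.succ_le_succ hab), mul_le_mul_of_nonneg_left hmid hx0,
        mul_le_mul_of_nonneg_left (ih hab) (mul_nonneg hx0 hx0)]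

theorem esymmOn_insert_mul_le {a : ι} (ha : a ∉ s) (hf : ∀ i ∈ insert a s, 0 ≤ f i)
    {j l : ℕ} (hjl : j ≤ l) :
    esymmOn (insert a s) f j * esymmOn s f l ≤ esymmOn (insert a s) f l * esymmOn s f j := by
  have ha0 : 0 ≤ f a := hf a (mem_insert_self a s)
  have hs : ∀ i ∈ s, 0 ≤ f i := fun i hi => hf i (mem_insert_of_mem hi)
  cases l with
  | zero => obtain rfl := Nat.le_zero.mp hjl; rfl
  | succ l =>
  cases j with
  | zero =>
    simp only [esymmOn_zero, one_mul, mul_one, esymmOn_insert ha]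
    nlinarith [mul_nonneg ha0 (esymmOn_nonneg hs l)]
  | succ j =>
    rw [esymmOn_insert ha, esymmOn_insert ha]
    nlinarith [mul_le_mul_of_nonneg_left (esymmOn_mul_succ_le hs (Nat.le_of_succ_le_succ hjl)) ha0]

end LogConcave

lemma prod_mul_sum_div_eq_sum_mul_prod_erase {ι K : Type*} [DecidableEq ι] [Field K]
    (s : Finset ι) (c d : ι → K) (hd : ∀ i ∈ s, d i ≠ 0) :
    (∏ i ∈ s, d i) * ∑ i ∈ s, c i / d i = ∑ i ∈ s, c i * ∏ j ∈ s.erase i, d j := by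
  rw [mul_sum]
  refine sum_congr rfl fun i hi => ?_
  rw [← mul_prod_erase s d hi]
  field_simp [hd i hi]

namespace Matrix

variable {ι R : Type*} [Fintype ι] [DecidableEq ι]

def principalMinorSum [CommRing R] (M : Matrix ι ι R) (k : ℕ) : R :=
  ∑ s ∈ univ.powersetCard k, (M.submatrix (Subtype.val : s → ι) Subtype.val).det

lemma esymm_eq_re_principalMinorSum (M : Matrix ι ι ℂ) (k : ℕ) :
    esymm M k = (M.principalMinorSum k).re :=
  rfl

lemma principalMinorSum_eq_of_charpoly_eq [CommRing R] {M N : Matrix ι ι R}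
    (h : M.charpoly = N.charpoly) (k : ℕ) : M.principalMinorSum k = N.principalMinorSum k := by
  by_cases hk : k ≤ Fintype.card ι
  · have hMN := (charpoly_coeff_eq_sum_minors M k hk).symm.trans
      (h ▸ charpoly_coeff_eq_sum_minors N k hk)
    exact (isUnit_neg_one.pow k).mul_left_cancel hMN
  · have hempty : univ.powersetCard k = ∅ :=
      powersetCard_eq_empty.mpr (by simpa using not_le.mp hk)
    simp only [principalMinorSum, hempty, sum_empty]

lemma principalMinorSum_star_mul_mul [CommRing R] [StarRing R] {U : Matrix ι ι R}
    (hU : U ∈ unitaryGroup ι R) (M : Matrix ι ι R) (k : ℕ) :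
    (star U * M * U).principalMinorSum k = M.principalMinorSum k := by
  refine principalMinorSum_eq_of_charpoly_eq ?_ k
  rw [charpoly_mul_comm, ← mul_assoc, mem_unitaryGroup_iff.mp hU, one_mul]

lemma principalMinorSum_diagonal [CommRing R] (d : ι → R) (k : ℕ) :
    (diagonal d).principalMinorSum k = esymmOn univ d k := by
  refine sum_congr rfl fun s _ => ?_
  rw [submatrix_diagonal _ _ Subtype.val_injective, det_diagonal]
  exact prod_coe_sort s d

section Derivative

variable {𝕜 : Type*} [NontriviallyNormedField 𝕜]

open Polynomial in
lemma hasDerivAt_det_one_add_smul (M : Matrix ι ι 𝕜) :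
    HasDerivAt (fun z : 𝕜 => det (1 + z • M)) M.trace 0 := by
  have h := (det (1 + (X : 𝕜[X]) • M.map C)).hasDerivAt 0
  rw [derivative_det_one_add_X_smul] at h
  convert h using 2 with z
  simp [eval_det, ← smul_eq_mul_diagonal]

lemma hasDerivAt_det_diagonal_add_smul (d : ι → 𝕜) (hd : ∀ i, d i ≠ 0) (N : Matrix ι ι 𝕜) :
    HasDerivAt (fun z : 𝕜 => det (diagonal d + z • N)) ((∏ i, d i) * ∑ i, N i i / d i) 0 := by
  have hfactor : ∀ z : 𝕜,
      diagonal d + z • N = diagonal d * (1 + z • (diagonal (fun i => (d i)⁻¹) * N)) := by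
    intro z
    rw [mul_add, mul_one, Matrix.mul_smul, ← mul_assoc, diagonal_mul_diagonal]
    simp [mul_inv_cancel₀ (hd _)]
  have htrace : trace (diagonal (fun i => (d i)⁻¹) * N) = ∑ i, N i i / d i := by
    simp [trace, diagonal_mul, div_eq_inv_mul]
  simp_rw [hfactor, det_mul, det_diagonal]
  exact htrace ▸ (hasDerivAt_det_one_add_smul _).const_mul _

lemma hasDerivAt_principalMinorSum_diagonal_add_smul (d : ι → 𝕜) (hd : ∀ i, d i ≠ 0)
    (C : Matrix ι ι 𝕜) (m : ℕ) :
    HasDerivAt (fun z : 𝕜 => (diagonal d + z • C).principalMinorSum (m + 1))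
      (∑ i, C i i * esymmOn (univ.erase i) d m) 0 := by
  rw [← sum_powersetCard_sum_mul_prod_erase (fun i => C i i) d m]
  refine HasDerivAt.fun_sum fun s _ => ?_
  have hsub : ∀ z : 𝕜, (diagonal d + z • C).submatrix (Subtype.val : s → ι) Subtype.val =
      diagonal (d ∘ Subtype.val) + z • C.submatrix Subtype.val Subtype.val := fun z => by
    rw [← submatrix_diagonal d Subtype.val Subtype.val_injective]
    rfl
  simp_rw [hsub]
  refine (hasDerivAt_det_diagonal_add_smul (d ∘ Subtype.val) (fun i => hd i.1) _).congr_deriv ?_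
  rw [← prod_mul_sum_div_eq_sum_mul_prod_erase s _ _ fun i _ => hd i]
  exact congrArg₂ _ (prod_coe_sort s d) (sum_coe_sort s fun i => C i i / d i)

end Derivative

end Matrix

section Hermitian

open Complex

variable {ι : Type*} [Fintype ι] [DecidableEq ι] {A : Matrix ι ι ℂ}

lemma Matrix.IsHermitian.esymm_eq_esymmOn_eigenvalues (hA : A.IsHermitian) (k : ℕ) :
    esymm A k = esymmOn univ hA.eigenvalues k := by
  have hchar : A.charpoly = (diagonal fun i => (hA.eigenvalues i : ℂ)).charpoly := by
    rw [hA.charpoly_eq, charpoly_diagonal]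
    rfl
  rw [esymm_eq_re_principalMinorSum, principalMinorSum_eq_of_charpoly_eq hchar,
    principalMinorSum_diagonal, ← ofReal_esymmOn, ofReal_re]

lemma Matrix.IsHermitian.star_eigenvectorUnitary_mul_mul (hA : A.IsHermitian) :
    star (hA.eigenvectorUnitary : Matrix ι ι ℂ) * A * hA.eigenvectorUnitary =
      diagonal fun i => (hA.eigenvalues i : ℂ) := by
  have h := hA.conjStarAlgAut_star_eigenvectorUnitary
  rw [Unitary.conjStarAlgAut_star_apply] at h
  exact h

lemma Matrix.PosDef.hasDerivAt_esymm_add_smul (hA : A.PosDef) (B : Matrix ι ι ℂ) (m : ℕ) :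
    HasDerivAt (fun t : ℝ => esymm (A + (t : ℂ) • B) (m + 1))
      (∑ i, ((star (hA.1.eigenvectorUnitary : Matrix ι ι ℂ) * B *
        hA.1.eigenvectorUnitary) i i).re * esymmOn (univ.erase i) hA.1.eigenvalues m) 0 := by
  set U : Matrix ι ι ℂ := ↑hA.1.eigenvectorUnitary
  have hconj : ∀ z : ℂ, star U * (A + z • B) * U =
      diagonal (fun i => (hA.1.eigenvalues i : ℂ)) + z • (star U * B * U) := fun z => by
    rw [mul_add, add_mul, hA.1.star_eigenvectorUnitary_mul_mul, Matrix.mul_smul, Matrix.smul_mul]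
  have hF := hasDerivAt_principalMinorSum_diagonal_add_smul (fun i => (hA.1.eigenvalues i : ℂ))
    (fun i => ofReal_ne_zero.mpr (hA.eigenvalues_pos i).ne') (star U * B * U) m
  convert HasDerivAt.real_of_complex (z := 0) (by rw [ofReal_zero]; exact hF) using 1
  · funext t
    rw [esymm_eq_re_principalMinorSum, ← principalMinorSum_star_mul_mul hA.1.eigenvectorUnitary.2,
      hconj]
  · simp only [re_sum, ← ofReal_esymmOn, re_mul_ofReal]

end Hermitian

theorem stmt7_general (n k r : ℕ) (hk1 : 1 ≤ k) (hkr : k ≤ r)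
    (A : Matrix (Fin n) (Fin n) ℂ) (hA : A.PosDef)
    (B : Matrix (Fin n) (Fin n) ℂ) (hB : B.PosSemidef) :
    esymm A (k - 1) * deriv (fun t : ℝ => esymm (A + (t : ℂ) • B) r) 0
      ≤ esymm A (r - 1) * deriv (fun t : ℝ => esymm (A + (t : ℂ) • B) k) 0 := by
  obtain ⟨k, rfl⟩ := Nat.exists_eq_add_of_le' hk1
  obtain ⟨r, rfl⟩ := Nat.exists_eq_add_of_le' (hk1.trans hkr)
  set U : Matrix (Fin n) (Fin n) ℂ := ↑hA.1.eigenvectorUnitary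
  have hC : (star U * B * U).PosSemidef := by
    simpa [star_eq_conjTranspose] using hB.conjTranspose_mul_mul_same U
  simp only [Nat.add_sub_cancel, (hA.hasDerivAt_esymm_add_smul B _).deriv,
    hA.1.esymm_eq_esymmOn_eigenvalues, mul_sum]
  refine sum_le_sum fun i _ => ?_
  have hCii : 0 ≤ ((star U * B * U) i i).re := (Complex.nonneg_iff.mp hC.diag_nonneg).1
  have hlc := esymmOn_insert_mul_le (notMem_erase i univ)
    (fun j _ => (hA.eigenvalues_pos j).le) (Nat.le_of_succ_le_succ hkr)
  rw [insert_erase (mem_univ i)] at hlc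
  nlinarith [mul_le_mul_of_nonneg_left hlc hCii]

/-- Lemma 6.2 (3), inequality (6.5): for `1 ≤ k ≤ r ≤ n`, a positive definite `A`, and
any positive semidefinite direction `B`,
`σ_{r-1}(A) · (d/dt)|₀ σ_k(A + tB) ≥ σ_{k-1}(A) · (d/dt)|₀ σ_r(A + tB)`,
i.e. `σ_{r-1}(A) T_{k-1}(A) ≥ σ_{k-1}(A) T_{r-1}(A)` in the Loewner order. -/
theorem stmt7 (n k r : ℕ) (hk1 : 1 ≤ k) (hkr : k ≤ r) (hrn : r ≤ n)
    (A : Matrix (Fin n) (Fin n) ℂ) (hA : A.PosDef)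
    (B : Matrix (Fin n) (Fin n) ℂ) (hB : B.PosSemidef) :
    esymm A (k - 1) * deriv (fun t : ℝ => esymm (A + (t : ℂ) • B) r) 0
      ≤ esymm A (r - 1) * deriv (fun t : ℝ => esymm (A + (t : ℂ) • B) k) 0 :=
  stmt7_general n k r hk1 hkr A hA B hB
end

section
/- Fix a finite index set ι with |ι| = n, partitioned into m nonempty blocks b₁,…,b_m. Let A be a positive semidefinite Hermitian complex matrix indexed by ι×ι. Then det A ≤ ∏_{i=1}^m det(A_{b_i}), where A_{b} denotes the principal submatrix of A on block b. Equivalently, det A ≤ det A' where A' is the block-diagonal pinching of A with respect to the partition. (Lemma 6.3 (1).) -/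
open Matrix ComplexOrder

/-!
Splitting off one block at a time reduces the inequality to two blocks. For a positive definite
`M = [[A, B], [Bᴴ, D]]` the Schur complement `S = D - Bᴴ A⁻¹ B` is positive semidefinite and
`det M = det A * det S`, while `D = S + Bᴴ A⁻¹ B` with `Bᴴ A⁻¹ B ≥ 0`; so it suffices that the
determinant is monotone on positive semidefinite matrices. For that, write `P = Xᴴ X` with `X`
invertible, so that `P + Q = Xᴴ (1 + C) X` with `C ≥ 0`, and `det (1 + C) = ∏ (1 + λᵢ) ≥ 1`.
A singular `M` has `det M = 0`, and there is nothing to prove.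
-/

namespace Matrix

variable {𝕜 : Type*} [RCLike 𝕜] {n : Type*} [Fintype n] [DecidableEq n]

theorem PosSemidef.one_le_det_one_add {C : Matrix n n 𝕜} (hC : C.PosSemidef) :
    1 ≤ (1 + C).det := by
  set U := hC.1.eigenvectorUnitary
  rw [hC.1.spectral_theorem, ← map_one (Unitary.conjStarAlgAut 𝕜 _ U), ← map_add,
    Unitary.conjStarAlgAut_apply,
    det_conj_of_mul_eq_one (Unitary.mul_star_self_of_mem U.2) (Unitary.star_mul_self_of_mem U.2),
    ← diagonal_one, diagonal_add, det_diagonal]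
  exact Finset.one_le_prod fun i _ =>
    le_add_of_nonneg_right (RCLike.ofReal_nonneg.2 (hC.eigenvalues_nonneg i))

open scoped MatrixOrder in
theorem PosSemidef.det_le_det_add {A B : Matrix n n 𝕜} (hA : A.PosSemidef) (hB : B.PosSemidef) :
    A.det ≤ (A + B).det := by
  by_cases hdet : A.det = 0
  · rw [hdet]
    exact (hA.add hB).det_nonneg
  obtain ⟨X, rfl⟩ := CStarAlgebra.nonneg_iff_eq_star_mul_self.mp hA.nonneg
  rw [star_eq_conjTranspose] at hA hdet ⊢
  have hX : X⁻¹ * X = 1 := by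
    rw [det_mul] at hdet
    exact nonsing_inv_mul X (isUnit_iff_ne_zero.2 (right_ne_zero_of_mul hdet))
  have hfactor : Xᴴ * X + B = Xᴴ * (1 + X⁻¹ᴴ * B * X⁻¹) * X := by
    calc Xᴴ * X + B = Xᴴ * X + (X⁻¹ * X)ᴴ * B * (X⁻¹ * X) := by
          rw [hX, conjTranspose_one, Matrix.one_mul, Matrix.mul_one]
      _ = Xᴴ * (1 + X⁻¹ᴴ * B * X⁻¹) * X := by
          simp only [conjTranspose_mul, Matrix.mul_add, Matrix.add_mul, Matrix.mul_one,
            Matrix.mul_assoc]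
  calc (Xᴴ * X).det ≤ (Xᴴ * X).det * (1 + X⁻¹ᴴ * B * X⁻¹).det :=
        le_mul_of_one_le_right hA.det_nonneg
          (hB.conjTranspose_mul_mul_same X⁻¹).one_le_det_one_add
    _ = (Xᴴ * X + B).det := by
        rw [hfactor]
        simp only [det_mul]
        ring

section Blocks

variable {α β : Type*} [Fintype α] [Fintype β] [DecidableEq α] [DecidableEq β]

theorem PosSemidef.det_fromBlocks_le_det_mul_det {A : Matrix α α 𝕜} {B : Matrix α β 𝕜}
    {D : Matrix β β 𝕜} (hM : (fromBlocks A B Bᴴ D).PosSemidef) :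
    (fromBlocks A B Bᴴ D).det ≤ A.det * D.det := by
  have hA : A.PosSemidef := hM.submatrix Sum.inl
  by_cases hdet : (fromBlocks A B Bᴴ D).det = 0
  · rw [hdet]
    exact mul_nonneg hA.det_nonneg (hM.submatrix Sum.inr : D.PosSemidef).det_nonneg
  have hAd : A.PosDef := (hM.posDef_iff_det_ne_zero.2 hdet).submatrix Sum.inl_injective
  have := hAd.isUnit.invertible
  have hSchur := (hAd.fromBlocks₁₁ B D).1 hM
  rw [det_fromBlocks₁₁, invOf_eq_nonsing_inv]
  refine mul_le_mul_of_nonneg_left ?_ hA.det_nonneg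
  simpa using hSchur.det_le_det_add (hAd.inv.posSemidef.conjTranspose_mul_mul_same B)

theorem PosSemidef.det_le_det_toBlocks₁₁_mul_det_toBlocks₂₂
    {M : Matrix (α ⊕ β) (α ⊕ β) 𝕜} (hM : M.PosSemidef) :
    M.det ≤ M.toBlocks₁₁.det * M.toBlocks₂₂.det := by
  have h₂₁ : M.toBlocks₂₁ = M.toBlocks₁₂ᴴ := by
    conv_lhs => rw [← hM.1]
    rfl
  rw [← M.fromBlocks_toBlocks, h₂₁] at hM ⊢
  simpa using hM.det_fromBlocks_le_det_mul_det

end Blocks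

theorem PosSemidef.det_le_det_submatrix_mul_det_submatrix_compl {ι : Type*} [Fintype ι]
    [DecidableEq ι] {A : Matrix ι ι 𝕜} (hA : A.PosSemidef) (p : ι → Prop) [DecidablePred p] :
    A.det ≤ (A.submatrix (Subtype.val : {i // p i} → ι) Subtype.val).det *
      (A.submatrix (Subtype.val : {i // ¬p i} → ι) Subtype.val).det := by
  have hsplit := (hA.submatrix (Equiv.sumCompl p)).det_le_det_toBlocks₁₁_mul_det_toBlocks₂₂
  rwa [det_submatrix_equiv_self] at hsplit

theorem det_submatrix_val_submatrix_val {R ι : Type*} [CommRing R] [Fintype ι] [DecidableEq ι]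
    (A : Matrix ι ι R) {p q : ι → Prop} [DecidablePred p] [DecidablePred q]
    (hqp : ∀ {i}, q i → p i) :
    ((A.submatrix (Subtype.val : Subtype p → ι) Subtype.val).submatrix
      (Subtype.val : {j : Subtype p // q j} → Subtype p) Subtype.val).det =
    (A.submatrix (Subtype.val : Subtype q → ι) Subtype.val).det := by
  rw [submatrix_submatrix]
  exact det_submatrix_equiv_self (Equiv.subtypeSubtypeEquivSubtype hqp)
    (A.submatrix Subtype.val Subtype.val)

theorem PosSemidef.det_le_prod_det_submatrix_fiber {κ : Type*} [DecidableEq κ] (s : Finset κ)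
    {ι : Type*} [Fintype ι] [DecidableEq ι] {A : Matrix ι ι 𝕜} (hA : A.PosSemidef)
    (blk : ι → κ) (hblk : ∀ i, blk i ∈ s) :
    A.det ≤ ∏ b ∈ s, (A.submatrix (Subtype.val : {i // blk i = b} → ι) Subtype.val).det := by
  induction s using Finset.induction_on generalizing ι with
  | empty =>
    have : IsEmpty ι := ⟨fun i => Finset.notMem_empty _ (hblk i)⟩
    simp
  | insert a s ha ih =>
    have hrest := ih (hA.submatrix (Subtype.val : {i // ¬blk i = a} → ι)) (fun i => blk i)
      fun i => (Finset.mem_insert.1 (hblk i)).resolve_left i.2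
    rw [Finset.prod_insert ha]
    refine (hA.det_le_det_submatrix_mul_det_submatrix_compl (blk · = a)).trans
      (mul_le_mul_of_nonneg_left (hrest.trans_eq (Finset.prod_congr rfl fun b hb => ?_))
        (hA.submatrix _).det_nonneg)
    have hqp : ∀ {i}, blk i = b → ¬blk i = a := fun hib hia => ha (hia ▸ hib ▸ hb)
    exact det_submatrix_val_submatrix_val A (p := fun i => ¬blk i = a) (q := (blk · = b)) hqp

end Matrix

theorem stmt8_general (ι : Type) [Fintype ι] [DecidableEq ι] (m : ℕ)
    (blk : ι → Fin m)
    (A : Matrix ι ι ℂ) (hA : A.PosSemidef) :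
    A.det.re ≤ ∏ b : Fin m,
      (A.submatrix (fun i : {x : ι // blk x = b} => (i : ι))
        (fun i : {x : ι // blk x = b} => (i : ι))).det.re := by
  have hreal (b : Fin m) := Complex.eq_re_of_ofReal_le (r := 0) <| by
    simpa using (hA.submatrix (fun i : {x : ι // blk x = b} => (i : ι))).det_nonneg
  have hfischer := hA.det_le_prod_det_submatrix_fiber Finset.univ blk fun _ => Finset.mem_univ _
  rw [Finset.prod_congr rfl fun b _ => hreal b, ← Complex.ofReal_prod] at hfischer
  exact (Complex.le_def.1 hfischer).1

/-- Lemma 6.3 (1) (Fischer's inequality): if `A` is a positive semidefinite Hermitian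
matrix indexed by a finite set `ι` partitioned into `m` nonempty blocks (the fibers of
a surjection `blk : ι → Fin m`), then `det A ≤ ∏ b, det (A_b)`, where `A_b` is the
principal submatrix of `A` on the block `b`. -/
theorem stmt8 (ι : Type) [Fintype ι] [DecidableEq ι] (n m : ℕ)
    (hcard : Fintype.card ι = n)
    (blk : ι → Fin m) (hblk : Function.Surjective blk)
    (A : Matrix ι ι ℂ) (hA : A.PosSemidef) :
    A.det.re ≤ ∏ b : Fin m,
      (A.submatrix (fun i : {x : ι // blk x = b} => (i : ι))
        (fun i : {x : ι // blk x = b} => (i : ι))).det.re :=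
  stmt8_general ι m blk A hA
end

section
/- Fix a finite index set ι with |ι| = n, partitioned into m nonempty blocks b₁,…,b_m, and let A be a positive semidefinite Hermitian complex matrix indexed by ι×ι, with block-diagonal pinching A'. Then 2^{m−1} · A' − A is positive semidefinite; that is, A ≤ 2^{m−1} A' in the Loewner order. (The pinching bound (6.19) established in the proof of Lemma 6.3 (3), obtained by iterating the two-block case 2A' − A ≥ 0.) -/
/-!
With `B i k = [blk i = k]` and `J` the all-ones matrix, the pinching is the Schur product
`A' = A ⊙ (B Bᴴ)`, and `c • B Bᴴ - J = B (c • 1 - J) Bᴴ`. For `c ≥ m` the matrix `c • 1 - J` is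
positive semidefinite by Cauchy–Schwarz, `|∑ x_k|² ≤ m ∑ |x_k|²`, so the Schur product theorem
gives `A ≤ c • A'`; the exponential constant only enters through `m ≤ 2 ^ (m - 1)`.
-/

open Matrix ComplexOrder

namespace Matrix

variable {ι κ 𝕜 : Type*} [Fintype κ] [RCLike 𝕜]

theorem norm_sum_sq_le_card_mul_sum_norm_sq {E : Type*} [SeminormedAddCommGroup E]
    (x : κ → E) :
    ‖∑ k, x k‖ ^ 2 ≤ Fintype.card κ * ∑ k, ‖x k‖ ^ 2 :=
  calc ‖∑ k, x k‖ ^ 2 ≤ (∑ k, ‖x k‖) ^ 2 := by gcongr; exact norm_sum_le _ _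
    _ ≤ _ := sq_sum_le_card_mul_sum_sq

variable [DecidableEq κ]

theorem star_dotProduct_smul_one_sub_allOnes_mulVec (c : ℝ) (x : κ → 𝕜) :
    star x ⬝ᵥ (((c : 𝕜) • 1 - of fun _ _ => 1 : Matrix κ κ 𝕜) *ᵥ x) =
      ((c * ∑ k, ‖x k‖ ^ 2 - ‖∑ k, x k‖ ^ 2 : ℝ) : 𝕜) := by
  have hJ : (of fun _ _ => 1 : Matrix κ κ 𝕜) *ᵥ x = fun _ => ∑ k, x k := by
    ext; simp [mulVec, dotProduct]
  rw [sub_mulVec, hJ, smul_mulVec, one_mulVec, dotProduct_sub, dotProduct_smul]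
  simp only [dotProduct, Pi.star_apply, RCLike.star_def, RCLike.conj_mul, ← Finset.sum_mul,
    ← map_sum]
  push_cast
  simp

theorem posSemidef_smul_one_sub_allOnes {c : ℝ} (hc : Fintype.card κ ≤ c) :
    ((c : 𝕜) • 1 - of fun _ _ => 1 : Matrix κ κ 𝕜).PosSemidef := by
  refine .of_dotProduct_mulVec_nonneg ?_ fun x => ?_
  · exact (isHermitian_one.smul (RCLike.conj_ofReal c)).sub (by ext; simp)
  · rw [star_dotProduct_smul_one_sub_allOnes_mulVec, RCLike.ofReal_nonneg, sub_nonneg]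
    calc ‖∑ k, x k‖ ^ 2 ≤ Fintype.card κ * ∑ k, ‖x k‖ ^ 2 :=
          norm_sum_sq_le_card_mul_sum_norm_sq x
      _ ≤ c * ∑ k, ‖x k‖ ^ 2 := by gcongr

variable (𝕜) in
def blockIndicator (blk : ι → κ) : Matrix ι κ 𝕜 :=
  of fun i k => if blk i = k then 1 else 0

def blockPinching (blk : ι → κ) (A : Matrix ι ι 𝕜) : Matrix ι ι 𝕜 :=
  of fun i j => if blk i = blk j then A i j else 0

theorem blockIndicator_mul_conjTranspose (blk : ι → κ) :
    blockIndicator 𝕜 blk * (blockIndicator 𝕜 blk)ᴴ =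
      of fun i j => if blk i = blk j then 1 else 0 := by
  ext i j
  simp [blockIndicator, mul_apply, eq_comm]

theorem blockIndicator_mul_allOnes_mul_conjTranspose (blk : ι → κ) :
    blockIndicator 𝕜 blk * (of fun _ _ => 1 : Matrix κ κ 𝕜) * (blockIndicator 𝕜 blk)ᴴ =
      of fun _ _ => 1 := by
  ext i j
  simp [blockIndicator, mul_apply]

theorem posSemidef_smul_sameBlock_sub_allOnes [Fintype ι] (blk : ι → κ) {c : ℝ}
    (hc : Fintype.card κ ≤ c) :
    ((c : 𝕜) • (of fun i j => if blk i = blk j then 1 else 0) - of fun _ _ => 1 :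
      Matrix ι ι 𝕜).PosSemidef := by
  have := (posSemidef_smul_one_sub_allOnes (𝕜 := 𝕜) hc).mul_mul_conjTranspose_same
    (blockIndicator 𝕜 blk)
  rwa [Matrix.mul_sub, Matrix.sub_mul, Matrix.mul_smul, Matrix.smul_mul, Matrix.mul_one,
    blockIndicator_mul_conjTranspose, blockIndicator_mul_allOnes_mul_conjTranspose] at this

omit [Fintype κ] in
theorem smul_blockPinching_sub_eq_hadamard (blk : ι → κ) (c : 𝕜) (A : Matrix ι ι 𝕜) :
    c • blockPinching blk A - A =
      A ⊙ (c • (of fun i j => if blk i = blk j then 1 else 0) - of fun _ _ => 1) := by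
  ext i j
  by_cases h : blk i = blk j <;> simp [blockPinching, h]
  ring

theorem PosSemidef.smul_blockPinching_sub [Fintype ι] {A : Matrix ι ι 𝕜} (hA : A.PosSemidef)
    (blk : ι → κ) {c : ℝ} (hc : Fintype.card κ ≤ c) :
    ((c : 𝕜) • blockPinching blk A - A).PosSemidef := by
  rw [smul_blockPinching_sub_eq_hadamard]
  exact hA.hadamard (posSemidef_smul_sameBlock_sub_allOnes blk hc)

end Matrix

theorem stmt10_general (ι : Type) [Fintype ι] (m : ℕ)
    (blk : ι → Fin m)
    (A : Matrix ι ι ℂ) (hA : A.PosSemidef) :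
    ((2 ^ (m - 1) : ℂ) • Matrix.of (fun i j => if blk i = blk j then A i j else 0)
        - A).PosSemidef := by
  have hcard : (Fintype.card (Fin m) : ℝ) ≤ 2 ^ (m - 1) := by
    have := Nat.lt_two_pow_self (n := m - 1)
    rw [Fintype.card_fin]
    exact_mod_cast (by omega : m ≤ 2 ^ (m - 1))
  have hpinch := hA.smul_blockPinching_sub blk hcard
  push_cast at hpinch
  exact hpinch

/-- The pinching bound (6.19) from the proof of Lemma 6.3 (3): if `A` is a positive
semidefinite Hermitian matrix indexed by a finite set `ι` partitioned into `m` nonempty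
blocks (the fibers of a surjection `blk : ι → Fin m`), and `A'` is its block-diagonal
pinching, then `2^(m-1) • A' - A` is positive semidefinite, i.e. `A ≤ 2^(m-1) A'`. -/
theorem stmt10 (ι : Type) [Fintype ι] [DecidableEq ι] (n m : ℕ)
    (hcard : Fintype.card ι = n)
    (blk : ι → Fin m) (hblk : Function.Surjective blk)
    (A : Matrix ι ι ℂ) (hA : A.PosSemidef) :
    ((2 ^ (m - 1) : ℂ) • Matrix.of (fun i j => if blk i = blk j then A i j else 0)
        - A).PosSemidef :=
  stmt10_general ι m blk A hA
end

section
/- For all integers 1 ≤ k ≤ l ≤ d there exists a constant C = C(d, l, k) > 0 such that for every d×d positive definite Hermitian complex matrix D and every d×d positive semidefinite Hermitian complex matrix B, (d/dt)|_{t=0} σ_l(D + tB) ≤ C · σ_k(D)^{(l−k)/k} · (d/dt)|_{t=0} σ_k(D + tB); equivalently, T_{l−1}(D) ≤ C · σ_k(D)^{(l−k)/k} · T_{k−1}(D) in the Loewner order. (Inequality (7.20), established in the proof of Lemma 7.9 by combining Lemma 6.2 (3) and the Newton–Maclaurin inequality.) -/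
open Matrix ComplexOrder

/-!
Write `D = U Λ U*` with `Λ = diag λ`, `λ > 0`. Since `σ_j` is, up to sign, a coefficient of the
characteristic polynomial, it is invariant under this conjugation, and Jacobi's formula at the
diagonal matrix `Λ` gives `(d/dt)|₀ σ_j(D + tB) = ∑ₓ bₓ ∂σ_j/∂λₓ(λ)` with `bₓ = (U* B U)ₓₓ ≥ 0`.
So it suffices to compare the partial derivatives. Put `r = σ_k(λ)^(1/k)`: as any `k` of the
`λ_y` multiply to at most `σ_k(λ) = r^k`, fewer than `k` of them exceed `r`. Hence every monomial
`∏_{y ∈ S∖x} λ_y` of `∂σ_l/∂λₓ` splits into `l - k` factors at most `r` and a monomial of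
`∂σ_k/∂λₓ`, and summing gives `∂σ_l/∂λₓ ≤ C(d, l) r^(l-k) ∂σ_k/∂λₓ`.
-/

open Finset

section
variable {ι : Type*} [DecidableEq ι]

lemma hasDerivAt_det_diagonal_add_smul [Fintype ι] (μ : ι → ℂ) (A : Matrix ι ι ℂ) :
    HasDerivAt (fun t : ℝ => (diagonal μ + (t : ℂ) • A).det)
      (∑ i, A i i * ∏ j ∈ univ.erase i, μ j) 0 := by
  have hentry (i j : ι) : HasDerivAt (fun t : ℝ => (diagonal μ + (t : ℂ) • A) i j) (A i j) 0 := by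
    simpa using ((hasDerivAt_id (0 : ℝ)).ofReal_comp.mul_const (A i j)).const_add (diagonal μ i j)
  have hdet := HasDerivAt.fun_sum fun σ (_ : σ ∈ univ) =>
    (HasDerivAt.fun_finsetProd fun i (_ : i ∈ univ) => hentry (σ i) i).const_mul
      (Equiv.Perm.sign σ : ℂ)
  simp only [← det_apply'] at hdet
  refine hdet.congr_deriv ?_
  rw [sum_eq_single (1 : Equiv.Perm ι)]
  · simp [mul_comm]
  · intro σ _ hσ
    refine mul_eq_zero_of_right _ (sum_eq_zero fun i _ => ?_)
    obtain ⟨j, hj, hji⟩ := σ.support.exists_mem_ne (Equiv.Perm.two_le_card_support_of_ne_one hσ) i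
    refine smul_eq_zero_of_left (prod_eq_zero (mem_erase.mpr ⟨hji, mem_univ j⟩) ?_) _
    simp [diagonal_apply_ne _ (Equiv.Perm.mem_support.mp hj)]
  · simp

lemma hasDerivAt_det_submatrix_diagonal_add_smul (μ : ι → ℂ) (A : Matrix ι ι ℂ) (S : Finset ι) :
    HasDerivAt (fun t : ℝ => ((diagonal μ + (t : ℂ) • A).submatrix ((↑) : S → ι) (↑)).det)
      (∑ i ∈ S, A i i * ∏ j ∈ S.erase i, μ j) 0 := by
  have hsub (t : ℝ) : (diagonal μ + (t : ℂ) • A).submatrix ((↑) : S → ι) (↑)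
      = diagonal (μ ∘ (↑)) + (t : ℂ) • A.submatrix (↑) (↑) := by
    rw [← submatrix_diagonal _ _ Subtype.coe_injective]
    rfl
  simp only [hsub]
  refine (hasDerivAt_det_diagonal_add_smul (μ ∘ (↑))
    (A.submatrix ((↑) : S → ι) (↑))).congr_deriv ?_
  rw [← sum_coe_sort S]
  simp [univ_eq_attach, prod_erase_attach (fun j => μ j)]

variable [Fintype ι]

lemma esymm_eq_re_charpoly_coeff (M : Matrix ι ι ℂ) {j : ℕ} (hj : j ≤ Fintype.card ι) :
    esymm M j = ((-1) ^ j * M.charpoly.coeff (Fintype.card ι - j)).re := by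
  rw [charpoly_coeff_eq_sum_minors M j hj, ← mul_assoc, ← mul_pow, neg_one_mul, neg_neg, one_pow,
    one_mul]
  rfl

lemma esymm_eq_zero_of_card_lt (M : Matrix ι ι ℂ) {j : ℕ} (hj : Fintype.card ι < j) :
    esymm M j = 0 := by
  rw [esymm, powersetCard_eq_empty.mpr (by rwa [card_univ]), sum_empty, Complex.zero_re]

lemma esymm_mul_mul_eq_of_mul_eq_one (M : Matrix ι ι ℂ) {U V : Matrix ι ι ℂ} (hUV : U * V = 1)
    (j : ℕ) : esymm (U * M * V) j = esymm M j := by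
  rcases le_or_gt j (Fintype.card ι) with hj | hj
  · have : (U * M * V).charpoly = M.charpoly := by
      rw [Matrix.mul_assoc, charpoly_mul_comm, Matrix.mul_assoc, mul_eq_one_comm.mp hUV,
        Matrix.mul_one]
    rw [esymm_eq_re_charpoly_coeff _ hj, esymm_eq_re_charpoly_coeff _ hj, this]
  · rw [esymm_eq_zero_of_card_lt _ hj, esymm_eq_zero_of_card_lt _ hj]

/-- `partialEsymm lam j x` is `∂σ_j/∂λ_x` at `λ = lam`. -/
noncomputable def partialEsymm (lam : ι → ℝ) (j : ℕ) (x : ι) : ℝ :=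
  ∑ S ∈ powersetCard j univ with x ∈ S, ∏ y ∈ S.erase x, lam y

lemma partialEsymm_nonneg {lam : ι → ℝ} (hlam : 0 ≤ lam) (j : ℕ) (x : ι) :
    0 ≤ partialEsymm lam j x :=
  sum_nonneg fun _ _ => prod_nonneg fun y _ => hlam y

lemma hasDerivAt_esymm_diagonal_add_smul (lam : ι → ℝ) (B : Matrix ι ι ℂ) (j : ℕ) :
    HasDerivAt (fun t : ℝ => esymm (diagonal (fun i => (lam i : ℂ)) + (t : ℂ) • B) j)
      (∑ x, (B x x).re * partialEsymm lam j x) 0 := by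
  have hsum := HasDerivAt.fun_sum fun S (_ : S ∈ powersetCard j univ) =>
    hasDerivAt_det_submatrix_diagonal_add_smul (fun i => (lam i : ℂ)) B S
  refine (Complex.reCLM.hasFDerivAt.comp_hasDerivAt 0 hsum).congr_deriv ?_
  rw [sum_comm' (t' := univ) (s' := fun x => (powersetCard j univ).filter (x ∈ ·)) (by simp)]
  simp [partialEsymm, mul_sum, ← Complex.ofReal_prod]

lemma esymm_diagonal_s12 (lam : ι → ℝ) (j : ℕ) :
    esymm (diagonal (fun i => (lam i : ℂ))) j = ∑ S ∈ powersetCard j univ, ∏ y ∈ S, lam y := by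
  simp [esymm, submatrix_diagonal _ _ Subtype.coe_injective, ← Complex.ofReal_prod, prod_attach]

lemma card_filter_lt_lt_of_prod_le {α : Type*} {lam : α → ℝ} {r : ℝ} {k : ℕ} (hr : 0 < r)
    (hk : 0 < k)    (hprod : ∀ V : Finset α, #V = k → ∏ y ∈ V, lam y ≤ r ^ k) (T : Finset α) :
    #{y ∈ T | r < lam y} < k := by
  by_contra! h
  obtain ⟨V, hVT, hV⟩ := exists_subset_card_eq h
  have hlt : ∏ _y ∈ V, r < ∏ y ∈ V, lam y :=
    prod_lt_prod_of_nonempty (fun _ _ => hr) (fun y hy => (mem_filter.mp (hVT hy)).2)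
      (card_pos.mp (hV ▸ hk))
  rw [prod_const, hV] at hlt
  exact (hprod V hV).not_gt hlt

section
variable {lam : ι → ℝ} {r : ℝ} {k l : ℕ}

lemma prod_erase_le_pow_mul_partialEsymm (hlam : 0 ≤ lam) (hr : 0 < r) (hk : 0 < k)
    (hkl : k ≤ l) (hprod : ∀ V : Finset ι, #V = k → ∏ y ∈ V, lam y ≤ r ^ k) {S : Finset ι}
    {x : ι} (hS : #S = l) (hx : x ∈ S) :
    ∏ y ∈ S.erase x, lam y ≤ r ^ (l - k) * partialEsymm lam k x := by
  have hcard : #(S.erase x) = l - 1 := by rw [card_erase_of_mem hx, hS]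
  -- `W` holds `k - 1` of the factors, among them every factor exceeding `r`.
  obtain ⟨W, hlarge, hWT, hW⟩ := exists_subsuperset_card_eq (filter_subset (r < lam ·) _)
    (Nat.le_sub_one_of_lt (card_filter_lt_lt_of_prod_le hr hk hprod (S.erase x)))
    (show k - 1 ≤ #(S.erase x) by omega)
  have hsmall : ∏ y ∈ S.erase x \ W, lam y ≤ r ^ (l - k) := by
    calc ∏ y ∈ S.erase x \ W, lam y ≤ ∏ _y ∈ S.erase x \ W, r :=
          prod_le_prod (fun y _ => hlam y) fun y hy => not_lt.mp fun hry =>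
            (mem_sdiff.mp hy).2 (hlarge (mem_filter.mpr ⟨(mem_sdiff.mp hy).1, hry⟩))
      _ = r ^ (l - k) := by
          rw [prod_const, card_sdiff_of_subset hWT, hcard, hW]
          congr 1
          omega
  have hxW : x ∉ W := fun h => notMem_erase x S (hWT h)
  have hinsert : insert x W ∈ (powersetCard k univ).filter (x ∈ ·) := by
    simp only [mem_filter, mem_powersetCard, subset_univ, true_and, mem_insert_self, and_true]
    rw [card_insert_of_notMem hxW, hW]
    omega
  have hWle : ∏ y ∈ W, lam y ≤ partialEsymm lam k x := by
    unfold partialEsymm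
    simpa only [erase_insert hxW] using single_le_sum (f := fun S => ∏ y ∈ S.erase x, lam y)
      (fun _ _ => prod_nonneg fun y _ => hlam y) hinsert
  calc ∏ y ∈ S.erase x, lam y = (∏ y ∈ S.erase x \ W, lam y) * ∏ y ∈ W, lam y :=
        (prod_sdiff hWT).symm
    _ ≤ r ^ (l - k) * partialEsymm lam k x :=
        mul_le_mul hsmall hWle (prod_nonneg fun y _ => hlam y) (by positivity)

lemma partialEsymm_le_choose_mul_pow_mul (hlam : 0 ≤ lam) (hr : 0 < r) (hk : 0 < k)
    (hkl : k ≤ l) (hprod : ∀ V : Finset ι, #V = k → ∏ y ∈ V, lam y ≤ r ^ k) (x : ι) :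
    partialEsymm lam l x ≤ (Fintype.card ι).choose l * r ^ (l - k) * partialEsymm lam k x := by
  have hterm (S : Finset ι) (hS : S ∈ (powersetCard l univ).filter (x ∈ ·)) :
      ∏ y ∈ S.erase x, lam y ≤ r ^ (l - k) * partialEsymm lam k x := by
    rw [mem_filter, mem_powersetCard] at hS
    exact prod_erase_le_pow_mul_partialEsymm hlam hr hk hkl hprod hS.1.2 hS.2
  have hnum : (#((powersetCard l univ).filter (x ∈ ·)) : ℝ) ≤ (Fintype.card ι).choose l := by
    exact_mod_cast (card_filter_le _ _).trans (card_powersetCard l univ).le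
  calc partialEsymm lam l x
      ≤ #((powersetCard l univ).filter (x ∈ ·)) * (r ^ (l - k) * partialEsymm lam k x) :=
        (sum_le_sum hterm).trans_eq (by rw [sum_const, nsmul_eq_mul])
    _ ≤ (Fintype.card ι).choose l * (r ^ (l - k) * partialEsymm lam k x) :=
        mul_le_mul_of_nonneg_right hnum (mul_nonneg (by positivity) (partialEsymm_nonneg hlam k x))
    _ = _ := by ring

end

lemma partialEsymm_le_choose_mul_rpow_mul {lam : ι → ℝ} (hlam : ∀ y, 0 < lam y) {k l : ℕ}
    (hk : 0 < k) (hkl : k ≤ l) (hl : l ≤ Fintype.card ι) (x : ι) :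
    partialEsymm lam l x ≤ (Fintype.card ι).choose l *
      (∑ S ∈ powersetCard k univ, ∏ y ∈ S, lam y) ^ (((l : ℝ) - k) / k) *
        partialEsymm lam k x := by
  set e := ∑ S ∈ powersetCard k univ, ∏ y ∈ S, lam y
  obtain ⟨T, -, hT⟩ := exists_subset_card_eq (show k ≤ #(univ : Finset ι) by
    rw [card_univ]; omega)
  have he : 0 < e := sum_pos (fun S _ => prod_pos fun y _ => hlam y)
    ⟨T, mem_powersetCard.mpr ⟨subset_univ T, hT⟩⟩
  have hk' : (k : ℝ) ≠ 0 := by positivity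
  have hpow (n : ℕ) : (e ^ (1 / (k : ℝ))) ^ n = e ^ ((n : ℝ) / k) := by
    rw [← Real.rpow_natCast, ← Real.rpow_mul he.le, one_div_mul_eq_div]
  have hprod (V : Finset ι) (hV : #V = k) : ∏ y ∈ V, lam y ≤ (e ^ (1 / (k : ℝ))) ^ k := by
    rw [hpow, div_self hk', Real.rpow_one]
    exact single_le_sum (f := fun S => ∏ y ∈ S, lam y)
      (fun S _ => prod_nonneg fun y _ => (hlam y).le) (mem_powersetCard.mpr ⟨subset_univ V, hV⟩)
  have hle := partialEsymm_le_choose_mul_pow_mul (fun y => (hlam y).le) (by positivity) hk hkl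
    hprod x
  rwa [hpow, Nat.cast_sub hkl] at hle

lemma esymm_eq_sum_prod_eigenvalues {D : Matrix ι ι ℂ} (hD : D.IsHermitian) (j : ℕ) :
    esymm D j = ∑ S ∈ powersetCard j univ, ∏ y ∈ S, hD.eigenvalues y := by
  conv_lhs => rw [hD.spectral_theorem, Unitary.conjStarAlgAut_apply]
  rw [esymm_mul_mul_eq_of_mul_eq_one _ (Unitary.mul_star_self_of_mem hD.eigenvectorUnitary.2)]
  exact esymm_diagonal_s12 _ j

lemma hasDerivAt_esymm_add_smul {D : Matrix ι ι ℂ} (hD : D.IsHermitian) (B : Matrix ι ι ℂ)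
    (j : ℕ) :
    HasDerivAt (fun t : ℝ => esymm (D + (t : ℂ) • B) j)
      (∑ x, ((star (hD.eigenvectorUnitary : Matrix ι ι ℂ) * B * hD.eigenvectorUnitary) x x).re *
        partialEsymm hD.eigenvalues j x) 0 := by
  set U : Matrix ι ι ℂ := ↑hD.eigenvectorUnitary
  have hU : U * star U = 1 := Unitary.mul_star_self_of_mem hD.eigenvectorUnitary.2
  have hconj (t : ℝ) : D + (t : ℂ) • B
      = U * (diagonal (fun i => (hD.eigenvalues i : ℂ)) + (t : ℂ) • (star U * B * U)) * star U := by
    conv_lhs => rw [hD.spectral_theorem, Unitary.conjStarAlgAut_apply]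
    simp only [Matrix.mul_add, Matrix.add_mul, Matrix.mul_smul, Matrix.smul_mul,
      ← Matrix.mul_assoc, hU, Matrix.one_mul]
    rw [Matrix.mul_assoc _ U, hU, Matrix.mul_one]
    rfl
  simp only [hconj, esymm_mul_mul_eq_of_mul_eq_one _ hU]
  exact hasDerivAt_esymm_diagonal_add_smul _ _ j

end

/-- Inequality (7.20) from the proof of Lemma 7.9: for all `1 ≤ k ≤ l ≤ d` there is a
constant `C = C(d, l, k) > 0` such that for every positive definite `D` and positive
semidefinite `B`,
`(d/dt)|₀ σ_l(D + tB) ≤ C · σ_k(D)^((l-k)/k) · (d/dt)|₀ σ_k(D + tB)`, i.e.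
`T_{l-1}(D) ≤ C σ_k(D)^((l-k)/k) T_{k-1}(D)` in the Loewner order. -/
theorem stmt12 (d l k : ℕ) (hk1 : 1 ≤ k) (hkl : k ≤ l) (hld : l ≤ d) :
    ∃ C : ℝ, 0 < C ∧ ∀ (D B : Matrix (Fin d) (Fin d) ℂ), D.PosDef → B.PosSemidef →
      deriv (fun t : ℝ => esymm (D + (t : ℂ) • B) l) 0
        ≤ C * esymm D k ^ (((l : ℝ) - k) / k) *
          deriv (fun t : ℝ => esymm (D + (t : ℂ) • B) k) 0 := by
  refine ⟨d.choose l, by exact_mod_cast Nat.choose_pos hld, fun D B hD hB => ?_⟩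
  set U : Matrix (Fin d) (Fin d) ℂ := ↑hD.1.eigenvectorUnitary
  have hb (x : Fin d) : 0 ≤ ((star U * B * U) x x).re :=
    (Complex.le_def.mp (hB.conjTranspose_mul_mul_same U).diag_nonneg).1
  rw [(hasDerivAt_esymm_add_smul hD.1 B l).deriv, (hasDerivAt_esymm_add_smul hD.1 B k).deriv,
    esymm_eq_sum_prod_eigenvalues hD.1, mul_sum]
  refine sum_le_sum fun x _ => ?_
  have hle := partialEsymm_le_choose_mul_rpow_mul hD.eigenvalues_pos hk1 hkl
    (by rwa [Fintype.card_fin]) x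
  rw [Fintype.card_fin] at hle
  exact (mul_le_mul_of_nonneg_left hle (hb x)).trans_eq (by ring)
end

section
/- For every real number K > 1, every integer n ≥ 1, and every integer k with 0 ≤ k ≤ n, one has (1+K)^{k+1} − K·(1 + K + 1/(2n))^k ≥ (1+K)^k / 2. (The coefficientwise inequality (9.27)–(9.29), which is the content of inequality (9.25) in Lemma 9.7.) -/
/-- The coefficientwise inequality (9.27)–(9.29) from Lemma 9.7: for every real
`K > 1`, every `n ≥ 1`, and every `0 ≤ k ≤ n`,
`(1+K)^(k+1) - K (1 + K + 1/(2n))^k ≥ (1+K)^k / 2`. -/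
theorem stmt13 (K : ℝ) (hK : 1 < K) (n : ℕ) (hn : 1 ≤ n) (k : ℕ) (hk : k ≤ n) :
    (1 + K) ^ k / 2 ≤ (1 + K) ^ (k + 1) - K * (1 + K + 1 / (2 * (n : ℝ))) ^ k := by
  have hK0 : (0:ℝ) < 1 + K := by linarith
  have hn' : (0:ℝ) < (n:ℝ) := by exact_mod_cast hn
  set a : ℝ := 1 / (2 * (n:ℝ) * (1 + K)) with ha
  have hapos : 0 < a := by positivity
  have hn1 : (1:ℝ) ≤ (n:ℝ) := by exact_mod_cast hn
  have ha1 : a < 1 := by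
    rw [ha, div_lt_one (by positivity)]
    nlinarith
  have hna : (n:ℝ) * a = 1 / (2 * (1 + K)) := by
    rw [ha]; field_simp
  have hna1 : (n:ℝ) * a < 1 := by
    rw [hna, div_lt_one (by positivity)]; linarith
  have heq : 1 + K + 1 / (2 * (n:ℝ)) = (1 + K) * (1 + a) := by
    rw [ha]; field_simp
  have hbern : 1 - (n:ℝ) * a ≤ (1 - a) ^ n := by
    have h := one_add_mul_le_pow (a := -a) (by linarith) n
    have : 1 + (n:ℝ) * (-a) ≤ (1 + -a) ^ n := h
    linarith [this, (by ring_nf : (1 + -a) ^ n = (1 - a) ^ n)]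
  have hk2 : (1 + a) ^ k ≤ (1 + a) ^ n := pow_le_pow_right₀ (by linarith) hk
  have h3 : (1 + a) ^ n * (1 - (n:ℝ) * a) ≤ 1 :=
    calc (1 + a) ^ n * (1 - (n:ℝ) * a) ≤ (1 + a) ^ n * (1 - a) ^ n :=
          mul_le_mul_of_nonneg_left hbern (by positivity)
      _ = ((1 + a) * (1 - a)) ^ n := (mul_pow _ _ _).symm
      _ ≤ 1 ^ n := pow_le_pow_left₀ (by nlinarith) (by nlinarith) n
      _ = 1 := one_pow n
  have hpos1 : 0 < 1 - (n:ℝ) * a := by linarith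
  have h4 : (1 + a) ^ n ≤ 1 / (1 - (n:ℝ) * a) := by
    rw [le_div_iff₀ hpos1]; exact h3
  have h5 : K * (1 + a) ^ k ≤ K + 1 / 2 := by
    have h6 : (1 + a) ^ k ≤ 1 / (1 - (n:ℝ) * a) := hk2.trans h4
    rw [hna] at h6
    have h6' : (1 + a) ^ k * (1 - 1 / (2 * (1 + K))) ≤ 1 := by
      rw [← le_div_iff₀ (by rw [sub_pos, div_lt_one (by linarith)]; linarith)]
      exact h6
    have hdd : 1 - 1 / (2 * (1 + K)) = (1 + 2 * K) / (2 + 2 * K) := by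
      field_simp; ring
    rw [hdd, ← mul_div_assoc, div_le_one (by linarith)] at h6'
    nlinarith [mul_le_mul_of_nonneg_left h6' (by linarith : (0:ℝ) ≤ K)]
  rw [heq, mul_pow, pow_succ]
  have hpk : (0:ℝ) < (1 + K) ^ k := pow_pos hK0 k
  nlinarith [mul_le_mul_of_nonneg_left h5 hpk.le]
end

section
/- Let n be a natural number and let θ be a real number with sin θ ≠ 0. Then for all real numbers x and y, sin θ · Re((x + iy)^n) − cos θ · Im((x + iy)^n) = −Σ_{k=0}^{n} binom(n,k) · (sin((k−1)θ)/(sin θ)^k) · (x − (cos θ/sin θ)·y)^{n−k} · y^k. (The algebraic identity underlying (12.9)–(12.12), by which the deformed Hermitian Yang–Mills equation Re(ω+iρ)^n = cot θ · Im(ω+iρ)^n is rewritten in the form (12.13) in the proof of Theorem 12.1.) -/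
open Real Complex

/-- The algebraic identity underlying (12.9)–(12.12) in the proof of Theorem 12.1:
for `sin θ ≠ 0` and all real `x`, `y`,
`sin θ · Re((x + iy)^n) - cos θ · Im((x + iy)^n)
  = -Σ_{k=0}^{n} C(n,k) · (sin((k-1)θ) / (sin θ)^k) · (x - cot θ · y)^(n-k) · y^k`. -/
theorem stmt15 (n : ℕ) (θ : ℝ) (hθ : Real.sin θ ≠ 0) (x y : ℝ) :
    Real.sin θ * (((x : ℂ) + (y : ℂ) * Complex.I) ^ n).re
      - Real.cos θ * (((x : ℂ) + (y : ℂ) * Complex.I) ^ n).im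
      = -∑ k ∈ Finset.range (n + 1), (n.choose k : ℝ) *
          (Real.sin (((k : ℝ) - 1) * θ) / (Real.sin θ) ^ k) *
          (x - (Real.cos θ / Real.sin θ) * y) ^ (n - k) * y ^ k := by
  have hsC : (Real.sin θ : ℂ) ≠ 0 := by exact_mod_cast hθ
  have hz : (x : ℂ) + (y : ℂ) * Complex.I
      = ((y / Real.sin θ : ℝ) : ℂ) * Complex.exp ((θ : ℂ) * Complex.I)
        + ((x - Real.cos θ / Real.sin θ * y : ℝ) : ℂ) := by
    apply Complex.ext <;>
      simp only [Complex.add_re, Complex.add_im, Complex.mul_re, Complex.mul_im,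
        Complex.exp_ofReal_mul_I_re, Complex.exp_ofReal_mul_I_im,
        Complex.ofReal_re, Complex.ofReal_im, Complex.I_re, Complex.I_im,
        mul_zero, zero_mul, mul_one, sub_zero, zero_sub, add_zero, zero_add] <;>
      field_simp <;> ring
  have hexp : ∀ k : ℕ, (Complex.exp ((θ : ℂ) * Complex.I)) ^ k
      = Complex.exp ((((k : ℝ) * θ : ℝ) : ℂ) * Complex.I) := by
    intro k
    rw [← Complex.exp_nat_mul]
    push_cast
    ring_nf
  rw [hz, add_pow, Complex.re_sum, Complex.im_sum, Finset.mul_sum, Finset.mul_sum,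
    ← Finset.sum_sub_distrib, ← Finset.sum_neg_distrib]
  refine Finset.sum_congr rfl fun k hk => ?_
  have hsin : Real.sin (((k : ℝ) - 1) * θ)
      = Real.sin ((k : ℝ) * θ) * Real.cos θ - Real.cos ((k : ℝ) * θ) * Real.sin θ := by
    rw [show ((k : ℝ) - 1) * θ = (k : ℝ) * θ - θ by ring, Real.sin_sub]
  simp only [mul_pow, hexp, Complex.mul_re, Complex.mul_im,
    Complex.exp_ofReal_mul_I_re, Complex.exp_ofReal_mul_I_im,
    ← Complex.ofReal_pow, Complex.ofReal_re, Complex.ofReal_im,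
    Complex.natCast_re, Complex.natCast_im, hsin]
  rw [div_pow]
  field_simp
  ring
end
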